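/- arXiv:2411.13479 — 5 statements merged into one kernel-verified Lean document; each statement's English description precedes it below -/
import Mathlib

section
/- Fix a miscoverage level α ∈ (0,1), a structural matrix H, and a symmetric positive definite m×m real matrix A, and set P_A = H(HᵀAH)⁻¹HᵀA. Let N ≥ 1 and, for t = 1,…,N, let y_t ∈ Im(H) and ŷ_t ∈ ℝ^m be arbitrary. Define the non-conformity scores š_t = ‖y_t − ŷ_t‖_A and s̊_t = ‖y_t − P_A ŷ_t‖_A, and let q̌ and q̊ be the ⌈(N+1)(1−α)⌉-th order statistics of (š_t)_{t≤N} and (s̊_t)_{t≤N} respectively (with the convention that the (N+1)-th order statistic equals +∞). Then q̊ ≤ q̌, and consequently, for all centers c, c' ∈ ℝ^m, the m-dimensional Lebesgue measure of the ellipsoid {y ∈ ℝ^m : ‖y − c‖_A ≤ q̊} is at most that of {y ∈ ℝ^m : ‖y − c'‖_A ≤ q̌}. -/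
open MeasureTheory Matrix

/-!
Since every `y_t` lies in `Im H`, `P_A y_t = y_t`, so `y_t - P_A ŷ_t = P_A (y_t - ŷ_t)`. As `P_A` is
the `A`-orthogonal projection onto `Im H`, it does not increase the `A`-norm; hence `s̊_t ≤ š_t`
for every `t`. Order statistics are monotone under pointwise comparison, so `q̊ ≤ q̌`. Lebesgue
measure is translation invariant, so the ellipsoid volume depends only on the radius and is
monotone in it.
-/

/-- The `k`-th order statistic (1-indexed) of `N` real numbers,
with junk value `0` outside the range `1 ≤ k ≤ N`. -/
noncomputable def ostat {N : ℕ} (s : Fin N → ℝ) (k : ℕ) : ℝ :=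
  if h : 1 ≤ k ∧ k ≤ N then (s ∘ Tuple.sort s) ⟨k - 1, by omega⟩ else 0

/-- The `k`-th order statistic as an extended real, with the conventions
`s_(0) = -∞` and `s_(k) = +∞` for `k > N`. -/
noncomputable def ostatE {N : ℕ} (s : Fin N → ℝ) (k : ℕ) : EReal :=
  if 1 ≤ k ∧ k ≤ N then ((ostat s k : ℝ) : EReal) else if k = 0 then ⊥ else ⊤

/-- The `A`-norm `‖u‖_A = √(uᵀ A u)`. -/
noncomputable def anorm {ι : Type*} [Fintype ι] (A : Matrix ι ι ℝ) (u : ι → ℝ) : ℝ :=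
  Real.sqrt (u ⬝ᵥ A.mulVec u)

namespace Tuple

open Finset

theorem comp_sort_le_comp_sort {α : Type*} [LinearOrder α] {N : ℕ} {s s' : Fin N → α}
    (h : s ≤ s') : s ∘ sort s ≤ s' ∘ sort s' := by
  classical
  intro i
  set a := (s' ∘ sort s') i
  -- the `i`-th smallest value is `≤ a` iff more than `i` values are `≤ a`
  have hcount (f : Fin N → α) : #{j | (f ∘ sort f) j ≤ a} = #{t | f t ≤ a} :=
    card_equiv (sort f) (by simp)
  rw [← lt_card_le_iff_apply_le_of_monotone (monotone_sort s), hcount]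
  have hi : i < #{t | s' t ≤ a} := by
    rw [← hcount, lt_card_le_iff_apply_le_of_monotone (monotone_sort s')]
  exact hi.trans_le (card_le_card fun t ht => by
    simp only [mem_filter, mem_univ, true_and] at ht ⊢
    exact (h t).trans ht)

end Tuple

lemma ostat_mono {N : ℕ} {s s' : Fin N → ℝ} (h : s ≤ s') (k : ℕ) : ostat s k ≤ ostat s' k := by
  unfold ostat
  split_ifs
  · exact Tuple.comp_sort_le_comp_sort h _
  · exact le_rfl

lemma ostatE_mono {N : ℕ} {s s' : Fin N → ℝ} (h : s ≤ s') (k : ℕ) :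
    ostatE s k ≤ ostatE s' k := by
  unfold ostatE
  split_ifs
  · exact EReal.coe_le_coe_iff.2 (ostat_mono h k)
  all_goals exact le_rfl

section AProj

variable {ι κ : Type*} [Fintype ι] [Fintype κ]

lemma dotProduct_mulVec_mulVec_mulVec {P : Matrix ι κ ℝ} (M : Matrix ι ι ℝ) (u : κ → ℝ) :
    (P *ᵥ u) ⬝ᵥ (M *ᵥ (P *ᵥ u)) = u ⬝ᵥ ((Pᵀ * M * P) *ᵥ u) := by
  rw [mulVec_mulVec, dotProduct_mulVec, vecMul_mulVec, ← dotProduct_mulVec, ← Matrix.mul_assoc]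

variable [DecidableEq κ]

/-- The paper's `P_A`: the `A`-orthogonal projection onto the column space of `H`. -/
noncomputable def aProj (A : Matrix ι ι ℝ) (H : Matrix ι κ ℝ) : Matrix ι ι ℝ :=
  H * (Hᵀ * A * H)⁻¹ * (Hᵀ * A)

variable {A : Matrix ι ι ℝ} {H : Matrix ι κ ℝ}

lemma isUnit_det_transpose_mul_mul (hA : A.PosDef) (hH : Function.Injective H.mulVec) :
    IsUnit (Hᵀ * A * H).det := by
  have := hA.conjTranspose_mul_mul_same hH
  rw [conjTranspose_eq_transpose_of_trivial] at this
  exact this.det_pos.ne'.isUnit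

lemma aProj_mul_self (hM : IsUnit (Hᵀ * A * H).det) : aProj A H * H = H := by
  rw [aProj, Matrix.mul_assoc, Matrix.mul_assoc, nonsing_inv_mul _ hM, Matrix.mul_one]

lemma aProj_mulVec_of_mem_range (hM : IsUnit (Hᵀ * A * H).det) {y : ι → ℝ}
    (hy : y ∈ Set.range H.mulVec) : aProj A H *ᵥ y = y := by
  obtain ⟨x, rfl⟩ := hy
  rw [mulVec_mulVec, aProj_mul_self hM]

lemma aProj_mul_aProj (hM : IsUnit (Hᵀ * A * H).det) : aProj A H * aProj A H = aProj A H := by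
  calc aProj A H * aProj A H = aProj A H * H * ((Hᵀ * A * H)⁻¹ * (Hᵀ * A)) := by
        simp only [aProj, Matrix.mul_assoc]
    _ = aProj A H := by rw [aProj_mul_self hM]; simp only [aProj, Matrix.mul_assoc]

lemma transpose_aProj_mul (hA : Aᵀ = A) : (aProj A H)ᵀ * A = A * aProj A H := by
  simp only [aProj, Matrix.transpose_mul, transpose_nonsing_inv, hA, transpose_transpose,
    Matrix.mul_assoc]

-- `‖u‖_A² = ‖P u‖_A² + ‖u - P u‖_A²` because `Pᵀ A = A P = Pᵀ A P`
lemma anorm_aProj_mulVec_le [DecidableEq ι] (hA : A.PosSemidef) (hM : IsUnit (Hᵀ * A * H).det)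
    (u : ι → ℝ) :
    anorm A (aProj A H *ᵥ u) ≤ anorm A u := by
  set P := aProj A H
  have hAT : Aᵀ = A := by simpa [conjTranspose_eq_transpose_of_trivial] using hA.1.eq
  have hsymm : Pᵀ * A = A * P := transpose_aProj_mul hAT
  have hPAP : Pᵀ * A * P = A * P := by rw [hsymm, Matrix.mul_assoc, aProj_mul_aProj hM]
  have hcompl : (1 - P)ᵀ * A * (1 - P) = A - A * P := by
    have hexpand : (1 - P)ᵀ * A * (1 - P) = A - A * P - (Pᵀ * A - Pᵀ * A * P) := by
      rw [Matrix.transpose_sub, Matrix.transpose_one]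
      noncomm_ring
    rw [hexpand, hPAP, hsymm, sub_self, sub_zero]
  have hrest : 0 ≤ ((1 - P) *ᵥ u) ⬝ᵥ (A *ᵥ ((1 - P) *ᵥ u)) := by
    simpa using hA.dotProduct_mulVec_nonneg ((1 - P) *ᵥ u)
  rw [dotProduct_mulVec_mulVec_mulVec, hcompl, sub_mulVec, dotProduct_sub] at hrest
  refine Real.sqrt_le_sqrt ?_
  rw [dotProduct_mulVec_mulVec_mulVec, hPAP]
  linarith

end AProj

lemma measure_sublevel_sub_le {G β : Type*} [AddGroup G] [MeasurableSpace G] [MeasurableAdd G]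
    (μ : Measure G) [μ.IsAddRightInvariant] [Preorder β] (f : G → β) {q q' : β} (hq : q ≤ q')
    (c c' : G) : μ {v | f (v - c) ≤ q} ≤ μ {v | f (v - c') ≤ q'} := by
  have htrans : {v | f (v - c) ≤ q} = (· + (-c + c')) ⁻¹' {v | f (v - c') ≤ q} := by
    ext v
    simp [sub_eq_add_neg, add_assoc]
  rw [htrans, measure_preimage_add_right]
  exact measure_mono fun v hv => le_trans hv hq

lemma injective_fromRows_one_mulVec {n p R : Type*} [Fintype n] [DecidableEq n] [Semiring R]
    (B : Matrix p n R) : Function.Injective (fromRows (1 : Matrix n n R) B).mulVec := by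
  intro x x' h
  simpa [fromRows_mulVec] using congrArg (fun v => v ∘ Sum.inl) h

theorem stmt0_general
    (n p : ℕ)
    (α : ℝ)
    (Hsub : Matrix (Fin p) (Fin n) ℝ)
    (H : Matrix (Fin n ⊕ Fin p) (Fin n) ℝ) (hH : H = Matrix.fromRows 1 Hsub)
    (A : Matrix (Fin n ⊕ Fin p) (Fin n ⊕ Fin p) ℝ) (hA : A.PosDef)
    (PA : Matrix (Fin n ⊕ Fin p) (Fin n ⊕ Fin p) ℝ)
    (hPA : PA = H * (Hᵀ * A * H)⁻¹ * (Hᵀ * A))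
    (N : ℕ)
    (y yhat : Fin N → (Fin n ⊕ Fin p) → ℝ)
    (hy : ∀ t, y t ∈ Set.range H.mulVec)
    (scheck sring : Fin N → ℝ)
    (hscheck : ∀ t, scheck t = anorm A (y t - yhat t))
    (hsring : ∀ t, sring t = anorm A (y t - PA.mulVec (yhat t)))
    (qcheck qring : EReal)
    (hqcheck : qcheck = ostatE scheck ⌈((N : ℝ) + 1) * (1 - α)⌉₊)
    (hqring : qring = ostatE sring ⌈((N : ℝ) + 1) * (1 - α)⌉₊) :
    qring ≤ qcheck ∧
      ∀ c c' : (Fin n ⊕ Fin p) → ℝ,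
        volume {v : (Fin n ⊕ Fin p) → ℝ | (anorm A (v - c) : EReal) ≤ qring} ≤
          volume {v : (Fin n ⊕ Fin p) → ℝ | (anorm A (v - c') : EReal) ≤ qcheck} := by
  have hM : IsUnit (Hᵀ * A * H).det :=
    isUnit_det_transpose_mul_mul hA (hH ▸ injective_fromRows_one_mulVec Hsub)
  have hscores : sring ≤ scheck := fun t => calc
    sring t = anorm A (aProj A H *ᵥ (y t - yhat t)) := by
      rw [hsring, mulVec_sub, aProj_mulVec_of_mem_range hM (hy t), hPA, aProj]
    _ ≤ anorm A (y t - yhat t) := anorm_aProj_mulVec_le hA.posSemidef hM _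
    _ = scheck t := (hscheck t).symm
  have hq : qring ≤ qcheck := hqring ▸ hqcheck ▸ ostatE_mono hscores _
  exact ⟨hq, measure_sublevel_sub_le volume (fun v => (anorm A v : EReal)) hq⟩

/-- Hierarchical SCP for joint coverage based on ellipsoidal sets:
the reconciled quantile is at most the plain one, and hence the reconciled prediction
ellipsoid has smaller Lebesgue measure, uniformly over centers. -/
theorem stmt0
    (n p : ℕ) (hn : 2 ≤ n) (hp : 1 ≤ p)
    (α : ℝ) (hα : α ∈ Set.Ioo (0 : ℝ) 1)
    (Hsub : Matrix (Fin p) (Fin n) ℝ)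
    (H : Matrix (Fin n ⊕ Fin p) (Fin n) ℝ) (hH : H = Matrix.fromRows 1 Hsub)
    (A : Matrix (Fin n ⊕ Fin p) (Fin n ⊕ Fin p) ℝ) (hA : A.PosDef)
    (PA : Matrix (Fin n ⊕ Fin p) (Fin n ⊕ Fin p) ℝ)
    (hPA : PA = H * (Hᵀ * A * H)⁻¹ * (Hᵀ * A))
    (N : ℕ) (hN : 1 ≤ N)
    (y yhat : Fin N → (Fin n ⊕ Fin p) → ℝ)
    (hy : ∀ t, y t ∈ Set.range H.mulVec)
    (scheck sring : Fin N → ℝ)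
    (hscheck : ∀ t, scheck t = anorm A (y t - yhat t))
    (hsring : ∀ t, sring t = anorm A (y t - PA.mulVec (yhat t)))
    (qcheck qring : EReal)
    (hqcheck : qcheck = ostatE scheck ⌈((N : ℝ) + 1) * (1 - α)⌉₊)
    (hqring : qring = ostatE sring ⌈((N : ℝ) + 1) * (1 - α)⌉₊) :
    qring ≤ qcheck ∧
      ∀ c c' : (Fin n ⊕ Fin p) → ℝ,
        volume {v : (Fin n ⊕ Fin p) → ℝ | (anorm A (v - c) : EReal) ≤ qring} ≤
          volume {v : (Fin n ⊕ Fin p) → ℝ | (anorm A (v - c') : EReal) ≤ qcheck} :=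
  stmt0_general n p α Hsub H hH A hA PA hPA N y yhat hy scheck sring hscheck hsring qcheck qring
    hqcheck hqring
end

section
/- Fix α ∈ (0,1) and N ≥ 1. Let s_1,…,s_N,s_{N+1} be i.i.d. nonnegative real random variables (non-conformity scores), and let q = s_{(⌈(N+1)(1−α)⌉)} be the ⌈(N+1)(1−α)⌉-th order statistic of s_1,…,s_N, with the convention that the (N+1)-th order statistic equals +∞. Then P(s_{N+1} ≤ q) ≥ 1 − α. If moreover the s_1,…,s_{N+1} are almost surely pairwise distinct, then P(s_{N+1} ≤ q) ≤ 1 − α + 1/(N+1). -/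
open MeasureTheory ProbabilityTheory Matrix
open scoped ENNReal

/-!
By independence and identical distribution, the score vector `(s_1, …, s_{N+1})` has the
exchangeable law `ν ^ (N+1)`. With `k = ⌈(N+1)(1-α)⌉`, the event `s_{N+1} ≤ q` says exactly that
fewer than `k` scores lie strictly below `s_{N+1}`, and by exchangeability each of the `N+1`
indices satisfies the analogous event with the same probability `p`. Hence `(N+1) p` is the
expected number of indices with fewer than `k` scores strictly below them. In every sample at
least `k` indices qualify (the first `k` in sorted order), and exactly `k` when the scores are
distinct; so `k ≤ (N+1) p`, with equality in the distinct case, and the bounds follow from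
`(N+1)(1-α) ≤ k < (N+1)(1-α) + 1`.
-/

open Finset

section Rank

variable {α : Type*} [LinearOrder α]

def strictRank {ι : Type*} [Fintype ι] (x : ι → α) (t : ι) : ℕ :=
  #{u | x u < x t}

lemma strictRank_comp_perm {ι : Type*} [Fintype ι] (x : ι → α) (σ : Equiv.Perm ι) (t : ι) :
    strictRank (x ∘ σ) t = strictRank x (σ t) :=
  card_equiv σ (by simp)

variable {n : ℕ}

lemma Monotone.le_apply_iff_card_lt_le {g : Fin n → α} (hg : Monotone g) (j : Fin n) (a : α) :
    a ≤ g j ↔ #{i | g i < a} ≤ j := by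
  constructor
  · intro h
    calc #{i | g i < a} ≤ #(Iio j) := card_le_card fun i hi => by
          simp only [mem_filter, mem_univ, true_and] at hi
          exact mem_Iio.2 (lt_of_not_ge fun hji => (h.trans (hg hji)).not_gt hi)
      _ = j := Fin.card_Iio j
  · intro h
    by_contra! hlt
    have : #(Iic j) ≤ #{i | g i < a} :=
      card_le_card fun i hi => by simpa using (hg (mem_Iic.1 hi)).trans_lt hlt
    rw [Fin.card_Iic] at this
    omega

lemma Monotone.card_lt_apply_le {g : Fin n → α} (hg : Monotone g) (j : Fin n) :
    #{i | g i < g j} ≤ j :=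
  (hg.le_apply_iff_card_lt_le j (g j)).1 le_rfl

lemma StrictMono.card_lt_apply {g : Fin n → α} (hg : StrictMono g) (j : Fin n) :
    #{i | g i < g j} = j := by
  rw [← Fin.card_Iio j]
  congr 1
  ext i
  simp [hg.lt_iff_lt]

lemma strictRank_sort_le (x : Fin n → α) (j : Fin n) :
    strictRank x (Tuple.sort x j) ≤ j := by
  rw [← strictRank_comp_perm]
  exact (Tuple.monotone_sort x).card_lt_apply_le j

lemma strictRank_sort_of_injective {x : Fin n → α} (hx : Function.Injective x) (j : Fin n) :
    strictRank x (Tuple.sort x j) = j := by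
  rw [← strictRank_comp_perm]
  exact ((Tuple.monotone_sort x).strictMono_of_injective
    (hx.comp (Tuple.sort x).injective)).card_lt_apply j

lemma card_strictRank_lt_eq_card_sort (x : Fin n → α) (k : ℕ) :
    #{t | strictRank x t < k} = #{j | strictRank x (Tuple.sort x j) < k} :=
  card_equiv (Tuple.sort x).symm (by simp)

lemma le_card_strictRank_lt (x : Fin n → α) {k : ℕ} (hk : k ≤ n) :
    k ≤ #{t | strictRank x t < k} := by
  rw [card_strictRank_lt_eq_card_sort]
  calc k = #{j : Fin n | (j : ℕ) < k} := by simp [Fin.card_filter_val_lt, hk]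
    _ ≤ _ := card_le_card fun j hj => by
      simp only [mem_filter, mem_univ, true_and] at hj ⊢
      exact (strictRank_sort_le x j).trans_lt hj

lemma card_strictRank_lt_of_injective {x : Fin n → α} (hx : Function.Injective x) {k : ℕ}
    (hk : k ≤ n) : #{t | strictRank x t < k} = k := by
  simp [card_strictRank_lt_eq_card_sort, strictRank_sort_of_injective hx, Fin.card_filter_val_lt,
    hk]

lemma strictRank_last (x : Fin (n + 1) → α) :
    strictRank x (Fin.last n) = #{i : Fin n | x i.castSucc < x (Fin.last n)} := by
  simp only [strictRank, card_filter, Fin.sum_univ_castSucc, lt_irrefl, if_false, add_zero]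

end Rank

lemma le_ostat_iff {N : ℕ} (s : Fin N → ℝ) {k : ℕ} (hk1 : 1 ≤ k) (hkN : k ≤ N) (a : ℝ) :
    a ≤ ostat s k ↔ #{i | s i < a} < k := by
  rw [ostat, dif_pos ⟨hk1, hkN⟩,
    (Tuple.monotone_sort s).le_apply_iff_card_lt_le,
    card_equiv (Tuple.sort s) (t := {i | s i < a}) (by simp)]
  change _ ≤ k - 1 ↔ _
  omega

lemma coe_le_ostatE_iff_strictRank_lt {N : ℕ} (x : Fin (N + 1) → ℝ) {k : ℕ} (hk1 : 1 ≤ k)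
    (hkN : k ≤ N + 1) :
    (x (Fin.last N) : EReal) ≤ ostatE (fun i : Fin N => x i.castSucc) k ↔
      strictRank x (Fin.last N) < k := by
  rw [strictRank_last]
  rcases hkN.lt_or_eq with hk | rfl
  · rw [ostatE, if_pos ⟨hk1, by omega⟩, EReal.coe_le_coe_iff, le_ostat_iff _ hk1 (by omega)]
  · simpa [ostatE] using (card_filter_le _ _).trans_lt (by simp : #(univ : Finset (Fin N)) < N + 1)

section Exchangeability

variable {α : Type*} [LinearOrder α] [MeasurableSpace α] {ι : Type*} [Fintype ι]

lemma measurable_strictRank [TopologicalSpace α] [OpensMeasurableSpace α]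
    [SecondCountableTopology α] [OrderClosedTopology α] (t : ι) :
    Measurable fun y : ι → α => strictRank y t := by
  simp_rw [strictRank, card_filter]
  exact Finset.measurable_sum _ fun u _ => Measurable.ite
    (measurableSet_lt (measurable_pi_apply u) (measurable_pi_apply t)) measurable_const
    measurable_const

lemma sum_measure_setOf_eq_lintegral_card {β : Type*} [MeasurableSpace β] (μ : Measure β)
    {P : ι → β → Prop} [∀ y, DecidablePred (P · y)] (hP : ∀ t, MeasurableSet {y | P t y}) :
    ∑ t, μ {y | P t y} = ∫⁻ y, (#{t | P t y} : ℝ≥0∞) ∂μ := by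
  calc ∑ t, μ {y | P t y} = ∑ t, ∫⁻ y, {y | P t y}.indicator 1 y ∂μ := by
        simp_rw [lintegral_indicator_one (hP _)]
    _ = ∫⁻ y, ∑ t, {y | P t y}.indicator 1 y ∂μ :=
        (lintegral_finsetSum _ fun t _ => measurable_const.indicator (hP t)).symm
    _ = ∫⁻ y, (#{t | P t y} : ℝ≥0∞) ∂μ := by
        simp only [Set.indicator_apply, Set.mem_ofPred_eq, Pi.one_apply, sum_boole]

lemma measure_strictRank_lt_eq [DecidableEq ι] (ν : Measure α) [SigmaFinite ν] (k : ℕ) (t t' : ι) :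
    Measure.pi (fun _ : ι => ν) {y | strictRank y t < k} =
      Measure.pi (fun _ : ι => ν) {y | strictRank y t' < k} := by
  have he : ∀ y, MeasurableEquiv.piCongrLeft (fun _ : ι => α) (Equiv.swap t t') y =
      y ∘ Equiv.swap t t' := fun y => funext fun i => by
    conv_lhs => rw [← Equiv.apply_symm_apply (Equiv.swap t t') i]
    rw [MeasurableEquiv.piCongrLeft_apply_apply]
    simp
  rw [← (measurePreserving_piCongrLeft (fun _ : ι => ν) (Equiv.swap t t')).measure_preimage_equiv]
  congr 1
  ext y
  simp [he, strictRank_comp_perm]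

end Exchangeability

lemma measurableSet_setOf_injective {ι α : Type*} [Countable ι] [MeasurableSpace α]
    [MeasurableEq α] : MeasurableSet {y : ι → α | Function.Injective y} := by
  simp only [Function.Injective, Set.ofPred_forall]
  refine .iInter fun t => .iInter fun t' => ?_
  by_cases h : t = t'
  · simp [h]
  · convert (measurableSet_eq_fun (f := fun y : ι → α => y t) (g := fun y => y t')
      (measurable_pi_apply t) (measurable_pi_apply t')).compl using 1
    ext y
    simp [h]

section Coverage

variable {α : Type*} [LinearOrder α] [MeasurableSpace α] [TopologicalSpace α]
  [OpensMeasurableSpace α] [SecondCountableTopology α] [OrderClosedTopology α]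

lemma card_mul_measure_strictRank_lt_eq_lintegral {ι : Type*} [Fintype ι] [DecidableEq ι]
    (ν : Measure α) [SigmaFinite ν] (k : ℕ) (t : ι) :
    Fintype.card ι * Measure.pi (fun _ : ι => ν) {y | strictRank y t < k} =
      ∫⁻ y, (#{u | strictRank y u < k} : ℝ≥0∞) ∂Measure.pi (fun _ : ι => ν) := by
  rw [← sum_measure_setOf_eq_lintegral_card (P := fun u y => strictRank y u < k) _
    fun u => measurableSet_lt (measurable_strictRank u) measurable_const]
  simp [measure_strictRank_lt_eq ν k _ t]

variable {n : ℕ} (ν : Measure α) [IsProbabilityMeasure ν] {k : ℕ}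

lemma natCast_le_mul_measure_strictRank_lt (hk : k ≤ n) (t : Fin n) :
    (k : ℝ≥0∞) ≤ n * Measure.pi (fun _ : Fin n => ν) {y | strictRank y t < k} := by
  have h := card_mul_measure_strictRank_lt_eq_lintegral ν k t
  rw [Fintype.card_fin] at h
  rw [h]
  calc (k : ℝ≥0∞) = ∫⁻ _, (k : ℝ≥0∞) ∂Measure.pi (fun _ : Fin n => ν) := by simp
    _ ≤ _ := lintegral_mono fun y => Nat.cast_le.2 (le_card_strictRank_lt y hk)

lemma mul_measure_strictRank_lt_of_ae_injective (hk : k ≤ n) (t : Fin n)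
    (hinj : ∀ᵐ y ∂Measure.pi (fun _ : Fin n => ν), Function.Injective y) :
    n * Measure.pi (fun _ : Fin n => ν) {y | strictRank y t < k} = k := by
  have h := card_mul_measure_strictRank_lt_eq_lintegral ν k t
  rw [Fintype.card_fin] at h
  rw [h]
  calc ∫⁻ y, (#{u | strictRank y u < k} : ℝ≥0∞) ∂Measure.pi (fun _ : Fin n => ν)
      = ∫⁻ _, (k : ℝ≥0∞) ∂Measure.pi (fun _ : Fin n => ν) :=
        lintegral_congr_ae <| hinj.mono fun y hy => by
          simp [card_strictRank_lt_of_injective hy hk]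
    _ = k := by simp

end Coverage

lemma ProbabilityTheory.iIndepFun.map_fun_eq_pi_of_identDistrib {Ω ι β : Type*} [MeasurableSpace Ω]
    [MeasurableSpace β] [Fintype ι] {μ : Measure Ω} [IsProbabilityMeasure μ] {s : ι → Ω → β}
    (hindep : iIndepFun s μ) (t₀ : ι) (hident : ∀ t, IdentDistrib (s t) (s t₀) μ μ) :
    μ.map (fun ω t => s t ω) = Measure.pi fun _ => μ.map (s t₀) := by
  rw [hindep.map_fun_eq_pi_map fun t => (hident t).aemeasurable_fst]
  exact congrArg Measure.pi (funext fun t => (hident t).map_eq)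

lemma ENNReal.ofReal_le_of_natCeil_le_mul {p : ℝ≥0∞} {c a : ℝ} (hc : 0 < c)
    (h : (⌈c * a⌉₊ : ℝ≥0∞) ≤ ENNReal.ofReal c * p) : ENNReal.ofReal a ≤ p := by
  rw [← ENNReal.mul_le_mul_iff_right (by simpa using hc) ENNReal.ofReal_ne_top,
    ← ENNReal.ofReal_mul hc.le]
  calc ENNReal.ofReal (c * a) ≤ ENNReal.ofReal ⌈c * a⌉₊ := ENNReal.ofReal_le_ofReal (Nat.le_ceil _)
    _ ≤ _ := by rwa [ENNReal.ofReal_natCast]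

lemma ENNReal.le_ofReal_add_one_div_of_mul_eq_natCeil {p : ℝ≥0∞} {c a : ℝ} (hc : 0 < c)
    (ha : 0 ≤ a) (h : ENNReal.ofReal c * p = ⌈c * a⌉₊) : p ≤ ENNReal.ofReal (a + 1 / c) := by
  rw [← ENNReal.mul_le_mul_iff_right (by simpa using hc) ENNReal.ofReal_ne_top,
    ← ENNReal.ofReal_mul hc.le, h, ← ENNReal.ofReal_natCast]
  refine ENNReal.ofReal_le_ofReal ((Nat.ceil_lt_add_one (by positivity)).le.trans_eq ?_)
  field_simp

theorem stmt1_general {Ω : Type*} [MeasurableSpace Ω] (μ : Measure Ω) [IsProbabilityMeasure μ]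
    (α : ℝ) (hα : α ∈ Set.Ioo (0 : ℝ) 1) (N : ℕ)
    (s : Fin (N + 1) → Ω → ℝ)
    (hindep : iIndepFun s μ)
    (hident : ∀ t t', IdentDistrib (s t) (s t') μ μ)
    (q : Ω → EReal)
    (hq : ∀ ω, q ω = ostatE (fun t : Fin N => s t.castSucc ω) ⌈((N : ℝ) + 1) * (1 - α)⌉₊) :
    ENNReal.ofReal (1 - α) ≤ μ {ω | (s (Fin.last N) ω : EReal) ≤ q ω} ∧
      ((∀ᵐ ω ∂μ, ∀ t t', t ≠ t' → s t ω ≠ s t' ω) →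
        μ {ω | (s (Fin.last N) ω : EReal) ≤ q ω} ≤
          ENNReal.ofReal (1 - α + 1 / ((N : ℝ) + 1))) := by
  obtain ⟨hα0, hα1⟩ := hα
  set k := ⌈((N : ℝ) + 1) * (1 - α)⌉₊
  have hk1 : 1 ≤ k := Nat.one_le_ceil_iff.2 (by nlinarith)
  have hkN : k ≤ N + 1 := Nat.ceil_le.2 (by push_cast; nlinarith)
  have hN : ENNReal.ofReal ((N : ℝ) + 1) = (N + 1 : ℕ) := by
    exact_mod_cast ENNReal.ofReal_natCast (N + 1)
  have hs : AEMeasurable (fun ω t => s t ω) μ :=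
    aemeasurable_pi_lambda _ fun t => (hident t t).aemeasurable_fst
  set π := Measure.pi fun _ : Fin (N + 1) => μ.map (s (Fin.last N))
  have hlaw : μ.map (fun ω t => s t ω) = π :=
    hindep.map_fun_eq_pi_of_identDistrib _ fun t => hident t _
  have hevent :
      μ {ω | (s (Fin.last N) ω : EReal) ≤ q ω} = π {y | strictRank y (Fin.last N) < k} := by
    rw [← hlaw, Measure.map_apply_of_aemeasurable hs
      (measurableSet_lt (measurable_strictRank _) measurable_const)]
    exact congrArg μ <| Set.ext fun ω => by
      rw [Set.mem_ofPred_eq, hq]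
      exact coe_le_ostatE_iff_strictRank_lt (fun t => s t ω) hk1 hkN
  have : IsProbabilityMeasure (μ.map (s (Fin.last N))) :=
    Measure.isProbabilityMeasure_map (hident (Fin.last N) (Fin.last N)).aemeasurable_fst
  rw [hevent]
  refine ⟨ENNReal.ofReal_le_of_natCeil_le_mul (c := (N : ℝ) + 1) (by positivity) ?_,
    fun hdist => ?_⟩
  · rw [hN]
    exact natCast_le_mul_measure_strictRank_lt _ hkN _
  · have hinj : ∀ᵐ y ∂π, Function.Injective y := by
      rw [← hlaw, ae_map_iff hs measurableSet_setOf_injective]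
      exact hdist.mono fun ω hω t t' h => not_imp_comm.1 (hω t t') (not_not.2 h)
    refine ENNReal.le_ofReal_add_one_div_of_mul_eq_natCeil (c := (N : ℝ) + 1) (by positivity)
      (by linarith) ?_
    rw [hN]
    exact mul_measure_strictRank_lt_of_ae_injective _ hkN _ hinj

/-- Coverage guarantee of split conformal prediction with a scalar
nonnegative non-conformity score: lower bound `1 - α`, and upper bound
`1 - α + 1/(N+1)` when the scores are a.s. pairwise distinct. -/
theorem stmt1 {Ω : Type*} [MeasurableSpace Ω] (μ : Measure Ω) [IsProbabilityMeasure μ]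
    (α : ℝ) (hα : α ∈ Set.Ioo (0 : ℝ) 1) (N : ℕ) (hN : 1 ≤ N)
    (s : Fin (N + 1) → Ω → ℝ)
    (hmeas : ∀ t, Measurable (s t))
    (hnonneg : ∀ t ω, 0 ≤ s t ω)
    (hindep : iIndepFun s μ)
    (hident : ∀ t t', IdentDistrib (s t) (s t') μ μ)
    (q : Ω → EReal)
    (hq : ∀ ω, q ω = ostatE (fun t : Fin N => s t.castSucc ω) ⌈((N : ℝ) + 1) * (1 - α)⌉₊) :
    ENNReal.ofReal (1 - α) ≤ μ {ω | (s (Fin.last N) ω : EReal) ≤ q ω} ∧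
      ((∀ᵐ ω ∂μ, ∀ t t', t ≠ t' → s t ω ≠ s t' ω) →
        μ {ω | (s (Fin.last N) ω : EReal) ≤ q ω} ≤
          ENNReal.ofReal (1 - α + 1 / ((N : ℝ) + 1))) :=
  stmt1_general μ α hα N s hindep hident q hq
end

section
/- Fix α ∈ (0,1) and N ≥ 1. Let s̃_1,…,s̃_N,s̃_{N+1} be i.i.d. random vectors with values in ℝ^m. For each component i ∈ {1,…,m}, let s̃_{(1),i} ≤ … ≤ s̃_{(N),i} be the order statistics of the i-th components s̃_{1,i},…,s̃_{N,i}, with the conventions s̃_{(0),i} = −∞ and s̃_{(N+1),i} = +∞. Then for every i ∈ {1,…,m}, P( s̃_{(⌊(N+1)α/2⌋),i} ≤ s̃_{N+1,i} ≤ s̃_{(⌈(N+1)(1−α/2)⌉),i} ) ≥ 1 − α. If moreover, for each i, the values s̃_{1,i},…,s̃_{N+1,i} are almost surely pairwise distinct, then for every i ∈ {1,…,m}, P( s̃_{(⌊(N+1)α/2⌋),i} ≤ s̃_{N+1,i} ≤ s̃_{(⌈(N+1)(1−α/2)⌉),i} ) ≤ 1 − α + 2/(N+1). -/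
open MeasureTheory ProbabilityTheory Matrix
open scoped ENNReal

/-!
Write `r(t) = #{u | x u ≤ x t}` for the rank of `x t` in the full sample of `N + 1` scores,
the test score being the last one. The test score lies between the `klo`-th and `khi`-th order
statistics of the calibration scores iff `klo < r(last)` and fewer than `khi` scores are
strictly below it. Since i.i.d. scores are exchangeable, the probability that the test score
has its rank in a set `K` is `1 / (N + 1)` times the expected number of indices with rank in
`K`, and that number is controlled deterministically: at most `k` indices have rank `≤ k`, and
when the scores are distinct the ranks are injective, so at most `b - a` of them lie in
`(a, b]`. The upper tail uses the same bound for the negated scores.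
-/

open Finset

lemma card_filter_comp_equiv {α β : Type*} [Fintype α] [Fintype β] (e : α ≃ β) (p : β → Prop)
    [DecidablePred p] : #{a | p (e a)} = #{b | p b} :=
  card_equiv e fun a => by simp

section Rank

variable {ι β : Type*} [Fintype ι] [LinearOrder β]

def sampleRank (x : ι → β) (t : ι) : ℕ := #{u | x u ≤ x t}

lemma sampleRank_comp_perm (x : ι → β) (σ : Equiv.Perm ι) (t : ι) :
    sampleRank (x ∘ σ) t = sampleRank x (σ t) :=
  card_filter_comp_equiv σ (x · ≤ x (σ t))

lemma card_sampleRank_le_le (x : ι → β) (k : ℕ) : #{t | sampleRank x t ≤ k} ≤ k := by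
  -- the largest value among more than `k` such indices would have rank `> k`
  by_contra! hk
  obtain ⟨t, ht, hmax⟩ := exists_max_image _ x (card_pos.1 (k.zero_le.trans_lt hk))
  have hsub : ({t | sampleRank x t ≤ k} : Finset ι) ⊆ ({u | x u ≤ x t} : Finset ι) :=
    fun u hu => mem_filter.2 ⟨mem_univ u, hmax u hu⟩
  exact (hk.trans_le (card_le_card hsub)).not_ge (mem_filter.1 ht).2

lemma sampleRank_lt_sampleRank {x : ι → β} {s t : ι} (h : x s < x t) :
    sampleRank x s < sampleRank x t := by
  refine card_lt_card ⟨fun u hu => ?_, fun hsub => ?_⟩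
  · simp only [mem_filter, mem_univ, true_and] at hu ⊢
    exact hu.trans h.le
  · simpa [h.not_ge] using @hsub t

lemma sampleRank_injective {x : ι → β} (hx : Function.Injective x) :
    Function.Injective (sampleRank x) := by
  intro s t hst
  by_contra hne
  rcases (hx.ne hne).lt_or_gt with h | h
  · exact (sampleRank_lt_sampleRank h).ne hst
  · exact (sampleRank_lt_sampleRank h).ne' hst

lemma card_sampleRank_mem_Ioc_le {x : ι → β} (hx : Function.Injective x) (a b : ℕ) :
    #{t | sampleRank x t ∈ Set.Ioc a b} ≤ b - a := by
  simpa using card_le_card_of_injOn (sampleRank x) (t := Ioc a b)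
    (fun t ht => by simpa using (mem_filter.1 ht).2) (sampleRank_injective hx).injOn

lemma sampleRank_eq_card_lt_add_one {x : ι → β} (hx : Function.Injective x) (t : ι) :
    sampleRank x t = #{u | x u < x t} + 1 := by
  classical
  have h : ({u | x u ≤ x t} : Finset ι) = insert t ({u | x u < x t} : Finset ι) := by
    ext u
    simp only [mem_filter, mem_univ, true_and, mem_insert, le_iff_lt_or_eq, hx.eq_iff]
    tauto
  rw [sampleRank, h, card_insert_of_notMem (by simp)]

lemma card_lt_add_sampleRank_neg (x : ι → ℝ) (t : ι) :
    #{u | x u < x t} + sampleRank (-x) t = Fintype.card ι := by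
  simpa [sampleRank, not_lt] using card_filter_add_card_filter_not (s := univ) (p := (x · < x t))

end Rank

lemma Monotone.apply_mem_iff_val_lt_card {β : Type*} [Preorder β] {n : ℕ} {g : Fin n → β}
    (hg : Monotone g) {S : Set β} [DecidablePred (· ∈ S)] (hS : IsLowerSet S) (j : Fin n) :
    g j ∈ S ↔ (j : ℕ) < #{i | g i ∈ S} := by
  constructor
  · intro hj
    have hsub : Iic j ⊆ ({i | g i ∈ S} : Finset (Fin n)) := fun i hi =>
      mem_filter.2 ⟨mem_univ i, hS (hg (mem_Iic.1 hi)) hj⟩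
    simpa using (card_le_card hsub).trans_lt' (by simp)
  · intro hj
    by_contra hnot
    have hsub : ({i | g i ∈ S} : Finset (Fin n)) ⊆ Iio j := fun i hi => by
      by_contra hij
      exact hnot (hS (hg (not_lt.1 (mt mem_Iio.2 hij))) (mem_filter.1 hi).2)
    simpa using hj.trans_le (card_le_card hsub)

lemma ostatE_eq_sort {N : ℕ} (s : Fin N → ℝ) {k : ℕ} (hk : 1 ≤ k ∧ k ≤ N) :
    ostatE s k = ((s ∘ Tuple.sort s) ⟨k - 1, by omega⟩ : EReal) := by
  rw [ostatE, if_pos hk, ostat, dif_pos hk]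

lemma ostatE_le_coe_iff {N : ℕ} (s : Fin N → ℝ) (y : ℝ) (k : ℕ) :
    ostatE s k ≤ (y : EReal) ↔ k ≤ #{t | s t ≤ y} := by
  by_cases hk : 1 ≤ k ∧ k ≤ N
  · rw [ostatE_eq_sort s hk, EReal.coe_le_coe_iff, ← Set.mem_Iic,
      (Tuple.monotone_sort s).apply_mem_iff_val_lt_card (isLowerSet_Iic y)]
    simp only [Set.mem_Iic, Function.comp_apply,
      card_filter_comp_equiv (Tuple.sort s) (s · ≤ y)]
    omega
  · rcases Nat.eq_zero_or_pos k with rfl | hk0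
    · simp [ostatE]
    · have hcard : #{t | s t ≤ y} ≤ N := (card_filter_le _ _).trans (by simp)
      rw [ostatE, if_neg hk, if_neg hk0.ne']
      simp only [top_le_iff, EReal.coe_ne_top, false_iff, not_le]
      omega

lemma coe_le_ostatE_iff {N : ℕ} (s : Fin N → ℝ) (y : ℝ) (k : ℕ) :
    (y : EReal) ≤ ostatE s k ↔ #{t | s t < y} < k := by
  by_cases hk : 1 ≤ k ∧ k ≤ N
  · rw [ostatE_eq_sort s hk, EReal.coe_le_coe_iff, ← not_lt, ← Set.mem_Iio,
      (Tuple.monotone_sort s).apply_mem_iff_val_lt_card (isLowerSet_Iio y)]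
    simp only [Set.mem_Iio, Function.comp_apply,
      card_filter_comp_equiv (Tuple.sort s) (s · < y)]
    omega
  · rcases Nat.eq_zero_or_pos k with rfl | hk0
    · simp [ostatE]
    · have hcard : #{t | s t < y} ≤ N := (card_filter_le _ _).trans (by simp)
      rw [ostatE, if_neg hk, if_neg hk0.ne']
      simp only [le_top, true_iff]
      omega

section Exchangeable

variable {ι β : Type*} [MeasurableSpace β]

def IsExchangeable (P : Measure (ι → β)) : Prop :=
  ∀ σ : Equiv.Perm ι, P.map (fun x i => x (σ i)) = P

lemma isExchangeable_map_of_iIndepFun [Fintype ι] {Ω : Type*} [MeasurableSpace Ω]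
    {μ : Measure Ω} {X : ι → Ω → β} (hindep : iIndepFun X μ)
    (hident : ∀ i j, IdentDistrib (X i) (X j) μ μ) :
    IsExchangeable (μ.map fun ω i => X i ω) := by
  intro σ
  have hX : ∀ i, AEMeasurable (X i) μ := fun i => (hident i i).aemeasurable_fst
  have hσ : Measurable fun (x : ι → β) i => x (σ i) :=
    measurable_pi_lambda _ fun i => measurable_pi_apply (σ i)
  rw [AEMeasurable.map_map_of_aemeasurable hσ.aemeasurable (aemeasurable_pi_lambda _ hX),
    Function.comp_def, (hindep.precomp σ.injective).map_fun_eq_pi_map fun i => hX (σ i),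
    hindep.map_fun_eq_pi_map hX]
  congr 1
  funext i
  exact (hident (σ i) i).map_eq

lemma IsExchangeable.map_comp {γ : Type*} [MeasurableSpace γ] {P : Measure (ι → β)}
    (hP : IsExchangeable P) {f : β → γ} (hf : Measurable f) :
    IsExchangeable (P.map fun x i => f (x i)) := by
  intro σ
  have hfx : Measurable fun (x : ι → β) i => f (x i) :=
    measurable_pi_lambda _ fun i => hf.comp (measurable_pi_apply i)
  conv_rhs => rw [← hP σ]
  rw [Measure.map_map (measurable_pi_lambda _ fun i => measurable_pi_apply (σ i)) hfx,
    Measure.map_map hfx (measurable_pi_lambda _ fun i => measurable_pi_apply (σ i))]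
  rfl

end Exchangeable

section RankLaw

variable {ι : Type*} [Fintype ι] {P : Measure (ι → ℝ)}

lemma measurable_sampleRank (t : ι) : Measurable fun x : ι → ℝ => sampleRank x t := by
  have h : (fun x : ι → ℝ => sampleRank x t) = fun x => ∑ u, if x u ≤ x t then 1 else 0 := by
    funext x; exact card_filter _ _
  rw [h]
  refine Finset.measurable_sum _ fun u _ => Measurable.ite ?_ measurable_const measurable_const
  exact measurableSet_le (measurable_pi_apply u) (measurable_pi_apply t)

lemma measurableSet_injective : MeasurableSet {x : ι → ℝ | Function.Injective x} :=
  measurableSet_setOfPred.2 <| Measurable.forall fun t => Measurable.forall fun t' =>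
    (measurableSet_setOfPred.1 (measurableSet_eq_fun (measurable_pi_apply t)
      (measurable_pi_apply t'))).imp measurable_const

lemma measurableSet_sampleRank_mem (K : Set ℕ) (t : ι) :
    MeasurableSet {x : ι → ℝ | sampleRank x t ∈ K} :=
  measurable_sampleRank t MeasurableSet.of_discrete

lemma IsExchangeable.measure_sampleRank_mem_eq (hP : IsExchangeable P) (K : Set ℕ) (t t' : ι) :
    P {x | sampleRank x t ∈ K} = P {x | sampleRank x t' ∈ K} := by
  classical
  have hσ : Measurable fun (x : ι → ℝ) i => x (Equiv.swap t t' i) :=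
    measurable_pi_lambda _ fun i => measurable_pi_apply _
  conv_lhs => rw [← hP (Equiv.swap t t'),
    Measure.map_apply hσ (measurableSet_sampleRank_mem K t)]
  congr 1
  ext x
  simp only [Set.mem_preimage, Set.mem_ofPred_eq]
  rw [show (fun i => x (Equiv.swap t t' i)) = x ∘ Equiv.swap t t' from rfl,
    sampleRank_comp_perm, Equiv.swap_apply_left]

lemma IsExchangeable.card_mul_measure_sampleRank_mem (hP : IsExchangeable P) (K : Set ℕ)
    [DecidablePred (· ∈ K)] (t : ι) :
    Fintype.card ι * P {x | sampleRank x t ∈ K} =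
      ∫⁻ x, (#{u | sampleRank x u ∈ K} : ℝ≥0∞) ∂P := by
  have hK := measurableSet_sampleRank_mem (ι := ι) K
  calc Fintype.card ι * P {x | sampleRank x t ∈ K}
      = ∑ u, P {x | sampleRank x u ∈ K} := by
        simp [hP.measure_sampleRank_mem_eq K _ t]
    _ = ∫⁻ x, ∑ u, {x | sampleRank x u ∈ K}.indicator 1 x ∂P := by
        rw [lintegral_finsetSum (f := fun u => {x : ι → ℝ | sampleRank x u ∈ K}.indicator 1) _
          fun u _ => measurable_const.indicator (hK u)]
        simp_rw [lintegral_indicator_one (hK _)]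
    _ = ∫⁻ x, (#{u | sampleRank x u ∈ K} : ℝ≥0∞) ∂P := by
        simp_rw [card_filter, Nat.cast_sum]
        simp [Set.indicator_apply]

lemma IsExchangeable.card_mul_measureReal_sampleRank_mem_le [IsProbabilityMeasure P]
    (hP : IsExchangeable P) {K : Set ℕ} [DecidablePred (· ∈ K)] {k : ℕ}
    (hk : ∀ᵐ x ∂P, #{u | sampleRank x u ∈ K} ≤ k) (t : ι) :
    Fintype.card ι * P.real {x | sampleRank x t ∈ K} ≤ k := by
  have h : Fintype.card ι * P {x | sampleRank x t ∈ K} ≤ k := by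
    rw [hP.card_mul_measure_sampleRank_mem]
    calc ∫⁻ x, (#{u | sampleRank x u ∈ K} : ℝ≥0∞) ∂P ≤ ∫⁻ _, (k : ℝ≥0∞) ∂P :=
          lintegral_mono_ae (hk.mono fun x hx => by exact_mod_cast hx)
      _ = k := by simp
  have := ENNReal.toReal_mono (ENNReal.natCast_ne_top k) h
  simpa [ENNReal.toReal_mul, measureReal_def] using this

end RankLaw

lemma Fin.card_filter_univ_castSucc {n : ℕ} (p : Fin (n + 1) → Prop) [DecidablePred p] :
    #{u | p u} = #{t : Fin n | p t.castSucc} + if p (Fin.last n) then 1 else 0 := by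
  rw [card_filter, Fin.sum_univ_castSucc, card_filter]

def LiesBetweenOrderStats {N : ℕ} (klo khi : ℕ) (x : Fin (N + 1) → ℝ) : Prop :=
  ostatE (fun t : Fin N => x t.castSucc) klo ≤ (x (Fin.last N) : EReal) ∧
    (x (Fin.last N) : EReal) ≤ ostatE (fun t : Fin N => x t.castSucc) khi

lemma liesBetweenOrderStats_iff {N : ℕ} (klo khi : ℕ) (x : Fin (N + 1) → ℝ) :
    LiesBetweenOrderStats klo khi x ↔
      klo < sampleRank x (Fin.last N) ∧ #{u | x u < x (Fin.last N)} < khi := by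
  rw [LiesBetweenOrderStats, ostatE_le_coe_iff, coe_le_ostatE_iff, sampleRank,
    Fin.card_filter_univ_castSucc, Fin.card_filter_univ_castSucc (x · < x (Fin.last N))]
  simp only [le_refl, lt_irrefl, if_true, if_false, add_zero, Nat.lt_succ_iff]

section Coverage

variable {N : ℕ} {P : Measure (Fin (N + 1) → ℝ)} [IsProbabilityMeasure P]

lemma IsExchangeable.mul_measureReal_not_liesBetweenOrderStats_le (hP : IsExchangeable P)
    (klo khi : ℕ) :
    (N + 1) * P.real {x | ¬ LiesBetweenOrderStats klo khi x} ≤ klo + (N + 1 - khi : ℕ) := by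
  have hm : Measurable fun (x : Fin (N + 1) → ℝ) i => -x i :=
    measurable_pi_lambda _ fun i => (measurable_pi_apply i).neg
  have : IsProbabilityMeasure (P.map fun x i => -x i) :=
    Measure.isProbabilityMeasure_map hm.aemeasurable
  have hneg : IsExchangeable (P.map fun x i => -x i) := hP.map_comp measurable_neg
  have hsub : {x | ¬ LiesBetweenOrderStats klo khi x} ⊆
      {x | sampleRank x (Fin.last N) ∈ Set.Iic klo} ∪
        (fun x i => -x i) ⁻¹' {x | sampleRank x (Fin.last N) ∈ Set.Iic (N + 1 - khi)} := by
    intro x hx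
    have hsum := card_lt_add_sampleRank_neg x (Fin.last N)
    simp only [Set.mem_ofPred_eq, liesBetweenOrderStats_iff, not_and_or, not_lt] at hx
    simp only [Set.mem_union, Set.mem_ofPred_eq, Set.mem_preimage, Set.mem_Iic, Fintype.card_fin]
      at hsum ⊢
    exact hx.imp id fun h => by change sampleRank (-x) _ ≤ _; omega
  have hlo := hP.card_mul_measureReal_sampleRank_mem_le (K := Set.Iic klo) (k := klo)
    (Filter.Eventually.of_forall fun x => by simpa using card_sampleRank_le_le x klo) (Fin.last N)
  have hhi := hneg.card_mul_measureReal_sampleRank_mem_le (K := Set.Iic (N + 1 - khi))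
    (k := N + 1 - khi)
    (Filter.Eventually.of_forall fun x => by simpa using card_sampleRank_le_le x (N + 1 - khi))
    (Fin.last N)
  rw [map_measureReal_apply hm (measurableSet_sampleRank_mem _ _)] at hhi
  simp only [Fintype.card_fin, Nat.cast_add, Nat.cast_one] at hlo hhi
  calc (N + 1) * P.real {x | ¬ LiesBetweenOrderStats klo khi x}
      ≤ (N + 1) * (P.real {x | sampleRank x (Fin.last N) ∈ Set.Iic klo} +
          P.real ((fun x i => -x i) ⁻¹'
            {x | sampleRank x (Fin.last N) ∈ Set.Iic (N + 1 - khi)})) := by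
        gcongr
        exact (measureReal_mono hsub).trans (measureReal_union_le _ _)
    _ ≤ klo + (N + 1 - khi : ℕ) := by rw [mul_add]; exact add_le_add hlo hhi

lemma IsExchangeable.mul_measureReal_liesBetweenOrderStats_le (hP : IsExchangeable P)
    (hinj : ∀ᵐ x ∂P, Function.Injective x) (klo khi : ℕ) :
    (N + 1) * P.real {x | LiesBetweenOrderStats klo khi x} ≤ (khi - klo : ℕ) := by
  have hcount := hP.card_mul_measureReal_sampleRank_mem_le (K := Set.Ioc klo khi)
    (hinj.mono fun x hx => card_sampleRank_mem_Ioc_le hx klo khi) (Fin.last N)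
  have hsub : {x | LiesBetweenOrderStats klo khi x} ≤ᵐ[P]
      {x | sampleRank x (Fin.last N) ∈ Set.Ioc klo khi} := by
    filter_upwards [hinj] with x hx (hL : LiesBetweenOrderStats klo khi x)
    rw [liesBetweenOrderStats_iff, sampleRank_eq_card_lt_add_one hx] at hL
    change sampleRank x _ ∈ Set.Ioc klo khi
    rw [Set.mem_Ioc, sampleRank_eq_card_lt_add_one hx]
    omega
  simp only [Fintype.card_fin, Nat.cast_add, Nat.cast_one] at hcount
  calc (N + 1) * P.real {x | LiesBetweenOrderStats klo khi x}
      ≤ (N + 1) * P.real {x | sampleRank x (Fin.last N) ∈ Set.Ioc klo khi} :=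
        mul_le_mul_of_nonneg_left
          (ENNReal.toReal_mono (measure_ne_top _ _) (measure_mono_ae hsub)) (by positivity)
    _ ≤ (khi - klo : ℕ) := hcount

end Coverage

lemma floor_add_sub_ceil_le {α : ℝ} (hα : 0 ≤ α) (n : ℕ) :
    (⌊(n : ℝ) * α / 2⌋₊ : ℝ) + (n - ⌈(n : ℝ) * (1 - α / 2)⌉₊ : ℕ) ≤ n * α := by
  have hlo : (⌊(n : ℝ) * α / 2⌋₊ : ℝ) ≤ n * α / 2 := Nat.floor_le (by positivity)
  have hhi : (n : ℝ) * (1 - α / 2) ≤ ⌈(n : ℝ) * (1 - α / 2)⌉₊ := Nat.le_ceil _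
  rcases le_total ⌈(n : ℝ) * (1 - α / 2)⌉₊ n with h | h
  · rw [Nat.cast_sub h]
    linarith
  · rw [Nat.sub_eq_zero_of_le h, Nat.cast_zero]
    have : (0 : ℝ) ≤ n * α := by positivity
    linarith

lemma ceil_sub_floor_le {α : ℝ} (hα : α ∈ Set.Icc (0 : ℝ) 1) (n : ℕ) :
    ((⌈(n : ℝ) * (1 - α / 2)⌉₊ - ⌊(n : ℝ) * α / 2⌋₊ : ℕ) : ℝ) ≤ n * (1 - α) + 2 := by
  obtain ⟨hα0, hα1⟩ := hα
  have hlo : (n : ℝ) * α / 2 < ⌊(n : ℝ) * α / 2⌋₊ + 1 := Nat.lt_floor_add_one _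
  have hhi : (⌈(n : ℝ) * (1 - α / 2)⌉₊ : ℝ) < n * (1 - α / 2) + 1 :=
    Nat.ceil_lt_add_one (by nlinarith [n.cast_nonneg (α := ℝ)])
  have hn : (0 : ℝ) ≤ n * (1 - α) := by nlinarith [n.cast_nonneg (α := ℝ)]
  rcases le_total ⌊(n : ℝ) * α / 2⌋₊ ⌈(n : ℝ) * (1 - α / 2)⌉₊ with h | h
  · rw [Nat.cast_sub h]
    linarith
  · rw [Nat.sub_eq_zero_of_le h, Nat.cast_zero]
    linarith

lemma measureReal_preimage_le_map {α β : Type*} [MeasurableSpace α] [MeasurableSpace β]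
    {μ : Measure α} [IsFiniteMeasure μ] {f : α → β} (hf : AEMeasurable f μ) (s : Set β) :
    μ.real (f ⁻¹' s) ≤ (μ.map f).real s :=
  ENNReal.toReal_mono (measure_ne_top _ _) (Measure.le_map_apply hf s)

section Iid

variable {Ω : Type*} [MeasurableSpace Ω] {μ : Measure Ω} [IsProbabilityMeasure μ] {N : ℕ}
  {X : Fin (N + 1) → Ω → ℝ}

lemma ofReal_one_sub_le_measure_liesBetweenOrderStats (hindep : iIndepFun X μ)
    (hident : ∀ t t', IdentDistrib (X t) (X t') μ μ) {klo khi : ℕ} {a : ℝ}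
    (hk : (klo : ℝ) + (N + 1 - khi : ℕ) ≤ (N + 1) * a) :
    ENNReal.ofReal (1 - a) ≤ μ {ω | LiesBetweenOrderStats klo khi (X · ω)} := by
  have hX : AEMeasurable (fun ω t => X t ω) μ :=
    aemeasurable_pi_lambda _ fun t => (hident t t).aemeasurable_fst
  have : IsProbabilityMeasure (μ.map fun ω t => X t ω) := Measure.isProbabilityMeasure_map hX
  have hlaw := (isExchangeable_map_of_iIndepFun hindep hident)
    |>.mul_measureReal_not_liesBetweenOrderStats_le klo khi
  have hcompl : μ.real {ω | LiesBetweenOrderStats klo khi (X · ω)}ᶜ ≤ a :=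
    (measureReal_preimage_le_map hX {x | ¬ LiesBetweenOrderStats klo khi x}).trans
      (le_of_mul_le_mul_left (hlaw.trans hk) (by positivity))
  have hunion := measureReal_union_le (μ := μ) {ω | LiesBetweenOrderStats klo khi (X · ω)}
    {ω | LiesBetweenOrderStats klo khi (X · ω)}ᶜ
  rw [Set.union_compl_self, probReal_univ] at hunion
  rw [← ofReal_measureReal]
  exact ENNReal.ofReal_le_ofReal (by linarith)

lemma measure_liesBetweenOrderStats_le (hindep : iIndepFun X μ)
    (hident : ∀ t t', IdentDistrib (X t) (X t') μ μ)
    (hinj : ∀ᵐ ω ∂μ, Function.Injective (X · ω)) {klo khi : ℕ} {b : ℝ}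
    (hk : ((khi - klo : ℕ) : ℝ) ≤ (N + 1) * b) :
    μ {ω | LiesBetweenOrderStats klo khi (X · ω)} ≤ ENNReal.ofReal b := by
  have hX : AEMeasurable (fun ω t => X t ω) μ :=
    aemeasurable_pi_lambda _ fun t => (hident t t).aemeasurable_fst
  have : IsProbabilityMeasure (μ.map fun ω t => X t ω) := Measure.isProbabilityMeasure_map hX
  have hlaw := (isExchangeable_map_of_iIndepFun hindep hident)
    |>.mul_measureReal_liesBetweenOrderStats_le ((ae_map_iff hX measurableSet_injective).2 hinj)
      klo khi
  rw [← ofReal_measureReal]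
  exact ENNReal.ofReal_le_ofReal <|
    (measureReal_preimage_le_map hX {x | LiesBetweenOrderStats klo khi x}).trans
      (le_of_mul_le_mul_left (hlaw.trans hk) (by positivity))

end Iid

theorem stmt2_general {Ω : Type*} [MeasurableSpace Ω] (μ : Measure Ω) [IsProbabilityMeasure μ]
    (α : ℝ) (hα : α ∈ Set.Ioo (0 : ℝ) 1) (N : ℕ) (m : ℕ)
    (s : Fin (N + 1) → Ω → Fin m → ℝ)
    (hindep : iIndepFun s μ)
    (hident : ∀ t t', IdentDistrib (s t) (s t') μ μ)
    (klo khi : ℕ)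
    (hklo : klo = ⌊((N : ℝ) + 1) * α / 2⌋₊)
    (hkhi : khi = ⌈((N : ℝ) + 1) * (1 - α / 2)⌉₊) :
    (∀ i : Fin m,
      ENNReal.ofReal (1 - α) ≤
        μ {ω | ostatE (fun t : Fin N => s t.castSucc ω i) klo ≤ (s (Fin.last N) ω i : EReal) ∧
               (s (Fin.last N) ω i : EReal) ≤ ostatE (fun t : Fin N => s t.castSucc ω i) khi}) ∧
      ((∀ i : Fin m, ∀ᵐ ω ∂μ, ∀ t t', t ≠ t' → s t ω i ≠ s t' ω i) →
        ∀ i : Fin m,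
          μ {ω | ostatE (fun t : Fin N => s t.castSucc ω i) klo ≤ (s (Fin.last N) ω i : EReal) ∧
                 (s (Fin.last N) ω i : EReal) ≤ ostatE (fun t : Fin N => s t.castSucc ω i) khi} ≤
            ENNReal.ofReal (1 - α + 2 / ((N : ℝ) + 1))) := by
  have hindep_i (i : Fin m) : iIndepFun (fun t ω => s t ω i) μ :=
    hindep.comp (fun _ v => v i) fun _ => measurable_pi_apply i
  have hident_i (i : Fin m) (t t' : Fin (N + 1)) :
      IdentDistrib (fun ω => s t ω i) (fun ω => s t' ω i) μ μ :=
    (hident t t').comp (measurable_pi_apply i)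
  have hlo := floor_add_sub_ceil_le hα.1.le (N + 1)
  have hhi := ceil_sub_floor_le (Set.Ioo_subset_Icc_self hα) (N + 1)
  push_cast at hlo hhi
  rw [← hklo, ← hkhi] at hlo hhi
  refine ⟨fun i => ofReal_one_sub_le_measure_liesBetweenOrderStats (hindep_i i) (hident_i i) hlo,
    fun hdistinct i => measure_liesBetweenOrderStats_le (hindep_i i) (hident_i i) ?_ ?_⟩
  · filter_upwards [hdistinct i] with ω hω t t' h
    by_contra hne
    exact hω t t' hne h
  · have hN : (0 : ℝ) < N + 1 := by positivity
    rw [mul_add, mul_div_cancel₀ _ hN.ne']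
    exact hhi

/-- Component-wise coverage guarantee of split conformal prediction
with signed vector-valued non-conformity scores: lower bound `1 - α` for each
component, and upper bound `1 - α + 2/(N+1)` under a.s. pairwise distinct scores. -/
theorem stmt2 {Ω : Type*} [MeasurableSpace Ω] (μ : Measure Ω) [IsProbabilityMeasure μ]
    (α : ℝ) (hα : α ∈ Set.Ioo (0 : ℝ) 1) (N : ℕ) (hN : 1 ≤ N) (m : ℕ) (hm : 1 ≤ m)
    (s : Fin (N + 1) → Ω → Fin m → ℝ)
    (hmeas : ∀ t, Measurable (s t))
    (hindep : iIndepFun s μ)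
    (hident : ∀ t t', IdentDistrib (s t) (s t') μ μ)
    (klo khi : ℕ)
    (hklo : klo = ⌊((N : ℝ) + 1) * α / 2⌋₊)
    (hkhi : khi = ⌈((N : ℝ) + 1) * (1 - α / 2)⌉₊) :
    (∀ i : Fin m,
      ENNReal.ofReal (1 - α) ≤
        μ {ω | ostatE (fun t : Fin N => s t.castSucc ω i) klo ≤ (s (Fin.last N) ω i : EReal) ∧
               (s (Fin.last N) ω i : EReal) ≤ ostatE (fun t : Fin N => s t.castSucc ω i) khi}) ∧
      ((∀ i : Fin m, ∀ᵐ ω ∂μ, ∀ t t', t ≠ t' → s t ω i ≠ s t' ω i) →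
        ∀ i : Fin m,
          μ {ω | ostatE (fun t : Fin N => s t.castSucc ω i) klo ≤ (s (Fin.last N) ω i : EReal) ∧
                 (s (Fin.last N) ω i : EReal) ≤ ostatE (fun t : Fin N => s t.castSucc ω i) khi} ≤
            ENNReal.ofReal (1 - α + 2 / ((N : ℝ) + 1))) :=
  stmt2_general μ α hα N m s hindep hident klo khi hklo hkhi
end

section
/- Fix α ∈ (0,1), a structural matrix H, and a weight vector w ∈ (0,∞)^m, and set P_w = H(Hᵀ diag(w) H)⁻¹ Hᵀ diag(w). Let ŝ_1,…,ŝ_N be i.i.d. random vectors in ℝ^m with a common elliptical distribution, and set s̃_t = P_w ŝ_t for each t. Let k_lo = ⌊(N+1)α/2⌋ and k_hi = ⌈(N+1)(1−α/2)⌉, and for each i ∈ {1,…,m} define the interval lengths ℓ̂_i = ŝ_{(k_hi),i} − ŝ_{(k_lo),i} and ℓ̃_i = s̃_{(k_hi),i} − s̃_{(k_lo),i}, where the order statistics are taken component-wise over t = 1,…,N, with conventions that the 0-th order statistic is −∞ and the (N+1)-th is +∞. Then E[ Σ_{i=1}^m w_i ℓ̃_i² ] ≤ E[ Σ_{i=1}^m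 w_i ℓ̂_i² ] (as an inequality in [0, +∞]). -/
open MeasureTheory ProbabilityTheory Matrix
open scoped ENNReal

/-- Conversion from `EReal` to `ℝ≥0∞` (sends `+∞` to `∞`, negative values to `0`). -/
noncomputable def erealToENNReal (x : EReal) : ℝ≥0∞ :=
  if x = ⊤ then ⊤ else ENNReal.ofReal x.toReal

/-- A random vector `z` in `ℝ^k` follows a spherical distribution (w.r.t. `μ`) if `Γ z`
has the same law as `z` for every orthogonal matrix `Γ`. -/
def IsSpherical {Ω : Type*} [MeasurableSpace Ω] {k : ℕ} (μ : Measure Ω)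
    (z : Ω → Fin k → ℝ) : Prop :=
  ∀ Γ : Matrix (Fin k) (Fin k) ℝ, Γ * Γᵀ = 1 →
    Measure.map (fun ω => Γ.mulVec (z ω)) μ = Measure.map z μ

/-- A random vector `s` follows an elliptical distribution if it has the law of
`c + M z` where `z` follows a spherical distribution on `ℝ^k` and `M Mᵀ` has rank `k`. -/
def IsElliptical {Ω : Type*} [MeasurableSpace Ω] {ι : Type*} [Fintype ι] [DecidableEq ι]
    (μ : Measure Ω) (s : Ω → ι → ℝ) : Prop :=
  ∃ (k : ℕ) (c : ι → ℝ) (M : Matrix ι (Fin k) ℝ) (z : Ω → Fin k → ℝ),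
    Measurable z ∧ (M * Mᵀ).rank = k ∧ IsSpherical μ z ∧
      Measure.map s μ = Measure.map (fun ω => c + M.mulVec (z ω)) μ

/-!
Translating a sample, or scaling it by `r ≥ 0`, translates or scales each of its order
statistics, so the squared length `ℓ(x)²` of an interval between two order statistics is
translation invariant and 2-homogeneous. Write each score as `c + M zₜ` with `zₜ` i.i.d.
spherical. The `i`-th component of `A ŝₜ` is `(A c)ᵢ + (A M)ᵢ ⬝ zₜ`, and a rotation taking the
row `(A M)ᵢ` to `‖(A M)ᵢ‖ e₀` preserves the joint law of the `zₜ`; hence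
`E[Σᵢ wᵢ ℓ((A ŝ)ᵢ)²] = C Σᵢ wᵢ ‖(A M)ᵢ‖²` with `C` independent of `A`. Take `A = 1` and
`A = P_w`: as `P_w` is the orthogonal projection onto `Im H` for the inner product weighted by
`w`, `Σᵢ wᵢ ‖(P_w M)ᵢ‖² ≤ Σᵢ wᵢ ‖Mᵢ‖²`. When `k_lo = 0` the reference lengths are infinite.
-/

open Finset

section OrderStatistics

variable {N : ℕ}

theorem ostat_comp_of_monotone {g : ℝ → ℝ} (hg : Monotone g) (s : Fin N → ℝ) {k : ℕ}
    (hk : k ∈ Set.Icc 1 N) : ostat (g ∘ s) k = g (ostat s k) := by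
  simp only [ostat, dif_pos (Set.mem_Icc.mp hk)]
  exact congrFun (Tuple.unique_monotone (Tuple.monotone_sort (g ∘ s))
    (hg.comp (Tuple.monotone_sort s))) _

theorem ostat_le_iff_le_card (s : Fin N → ℝ) {k : ℕ} (hk : k ∈ Set.Icc 1 N) (c : ℝ) :
    ostat s k ≤ c ↔ k ≤ #{t | s t ≤ c} := by
  have hcard : #{j | (s ∘ Tuple.sort s) j ≤ c} = #{t | s t ≤ c} :=
    card_equiv (Tuple.sort s) (by simp)
  simp only [ostat, dif_pos (Set.mem_Icc.mp hk)]
  rw [← Tuple.lt_card_le_iff_apply_le_of_monotone (Tuple.monotone_sort s), hcard]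
  have := hk.1
  dsimp only
  omega

theorem measurable_ostat (k : ℕ) : Measurable fun s : Fin N → ℝ => ostat s k := by
  by_cases hk : k ∈ Set.Icc 1 N
  · refine measurable_of_Iic fun c => ?_
    have hcount : Measurable fun s : Fin N → ℝ => #{t | s t ≤ c} := by
      simp only [card_filter]
      exact Finset.measurable_sum _ fun t _ =>
        Measurable.ite (measurableSet_le (measurable_pi_apply t) measurable_const)
          measurable_const measurable_const
    have hpre : (fun s : Fin N → ℝ => ostat s k) ⁻¹' Set.Iic c =
        (fun s : Fin N → ℝ => #{t | s t ≤ c}) ⁻¹' Set.Ici k := by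
      ext s; exact ostat_le_iff_le_card s hk c
    rw [hpre]
    exact hcount measurableSet_Ici
  · simp only [ostat, dif_neg (mt Set.mem_Icc.mpr hk)]
    exact measurable_const

end OrderStatistics

noncomputable def ostatGap {N : ℕ} (klo khi : ℕ) (s : Fin N → ℝ) : ℝ≥0∞ :=
  ENNReal.ofReal (ostat s khi - ostat s klo)

section OstatGap

variable {N klo khi : ℕ}

theorem measurable_ostatGap (klo khi : ℕ) : Measurable (ostatGap (N := N) klo khi) :=
  ENNReal.measurable_ofReal.comp ((measurable_ostat khi).sub (measurable_ostat klo))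

variable (hlo : klo ∈ Set.Icc 1 N) (hhi : khi ∈ Set.Icc 1 N)
include hlo hhi

theorem ostatGap_const_add (b : ℝ) (s : Fin N → ℝ) :
    ostatGap klo khi (fun t => b + s t) = ostatGap klo khi s := by
  have hg : Monotone (b + ·) := fun _ _ h => add_le_add_right h b
  simp only [ostatGap]
  erw [ostat_comp_of_monotone hg s hhi, ostat_comp_of_monotone hg s hlo, add_sub_add_left_eq_sub]

theorem ostatGap_smul {r : ℝ} (hr : 0 ≤ r) (s : Fin N → ℝ) :
    ostatGap klo khi (r • s) = ENNReal.ofReal r * ostatGap klo khi s := by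
  have hg : Monotone (r * ·) := fun _ _ h => mul_le_mul_of_nonneg_left h hr
  simp only [ostatGap]
  erw [ostat_comp_of_monotone hg s hhi, ostat_comp_of_monotone hg s hlo, ← mul_sub,
    ENNReal.ofReal_mul hr]

theorem erealToENNReal_ostatE_sub_ostatE (s : Fin N → ℝ) :
    erealToENNReal (ostatE s khi - ostatE s klo) = ostatGap klo khi s := by
  simp only [ostatE, if_pos (Set.mem_Icc.mp hlo), if_pos (Set.mem_Icc.mp hhi), ← EReal.coe_sub,
    erealToENNReal, if_neg (EReal.coe_ne_top _), EReal.toReal_coe, ostatGap]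

end OstatGap

theorem erealToENNReal_ostatE_sub_ostatE_zero {N k : ℕ} (hk : k ≠ 0) (s : Fin N → ℝ) :
    erealToENNReal (ostatE s k - ostatE s 0) = ⊤ := by
  have hk_ne_bot : ostatE s k ≠ ⊥ := by
    unfold ostatE; split_ifs <;> simp
  have h0 : ostatE s 0 = ⊥ := by simp [ostatE]
  rw [h0, EReal.sub_bot hk_ne_bot, erealToENNReal, if_pos rfl]

theorem ceil_mul_one_sub_half_ne_zero {N : ℕ} {α : ℝ} (hα : α < 2) :
    ⌈((N : ℝ) + 1) * (1 - α / 2)⌉₊ ≠ 0 :=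
  (Nat.ceil_pos.mpr (by nlinarith)).ne'

theorem floor_ceil_ranks_mem_Icc {N : ℕ} {α : ℝ} (hα : α ≤ 1)
    (hlo : ⌊((N : ℝ) + 1) * α / 2⌋₊ ≠ 0) :
    ⌊((N : ℝ) + 1) * α / 2⌋₊ ∈ Set.Icc 1 N ∧ ⌈((N : ℝ) + 1) * (1 - α / 2)⌉₊ ∈ Set.Icc 1 N := by
  have h1 : (1 : ℝ) ≤ ((N : ℝ) + 1) * α / 2 := Nat.one_le_floor_iff _ |>.mp (by omega)
  have hhi : ⌈((N : ℝ) + 1) * (1 - α / 2)⌉₊ ≤ N := Nat.ceil_le.mpr (by linarith)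
  have hle : ⌊((N : ℝ) + 1) * α / 2⌋₊ ≤ ⌈((N : ℝ) + 1) * (1 - α / 2)⌉₊ :=
    (Nat.floor_mono (by nlinarith)).trans (Nat.floor_le_ceil _)
  exact ⟨⟨by omega, by omega⟩, ⟨by omega, hhi⟩⟩

namespace Matrix

variable {ι κ : Type*} [Fintype ι] [DecidableEq ι] [Fintype κ]

noncomputable def weightedProj [DecidableEq κ] (H : Matrix ι κ ℝ) (w : ι → ℝ) : Matrix ι ι ℝ :=
  H * (Hᵀ * diagonal w * H)⁻¹ * (Hᵀ * diagonal w)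

theorem posDef_transpose_mul_diagonal_mul {w : ι → ℝ} (hw : ∀ i, 0 < w i) {H : Matrix ι κ ℝ}
    (hH : Function.Injective H.mulVec) : (Hᵀ * diagonal w * H).PosDef := by
  simpa using (PosDef.diagonal hw).conjTranspose_mul_mul_same hH

theorem injective_mulVec_fromRows_one {p : Type*} (B : Matrix p κ ℝ) [DecidableEq κ] :
    Function.Injective (fromRows (1 : Matrix κ κ ℝ) B).mulVec := fun x y hxy => by
  simpa [fromRows_mulVec] using congrArg (fun v => v ∘ Sum.inl) hxy

theorem transpose_weightedProj_mul_diagonal_mul [DecidableEq κ] {w : ι → ℝ} {H : Matrix ι κ ℝ}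
    (hG : IsUnit (Hᵀ * diagonal w * H).det) :
    (weightedProj H w)ᵀ * diagonal w * weightedProj H w = diagonal w * weightedProj H w := by
  unfold weightedProj
  set G := Hᵀ * diagonal w * H
  have hGt : Gᵀ = G := by simp [G, Matrix.mul_assoc]
  calc (H * G⁻¹ * (Hᵀ * diagonal w))ᵀ * diagonal w * (H * G⁻¹ * (Hᵀ * diagonal w))
      = diagonal w * H * (G⁻¹ * G) * G⁻¹ * (Hᵀ * diagonal w) := by
        rw [transpose_mul, transpose_mul, transpose_mul, transpose_nonsing_inv, hGt,
          diagonal_transpose, transpose_transpose]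
        simp only [G, Matrix.mul_assoc]
    _ = diagonal w * (H * G⁻¹ * (Hᵀ * diagonal w)) := by
        rw [nonsing_inv_mul _ hG]; simp only [Matrix.mul_one, Matrix.mul_assoc]

theorem sum_mul_mulVec_sq_le_of_transpose_mul_diagonal_mul_eq {w : ι → ℝ} (hw : ∀ i, 0 ≤ w i)
    {P : Matrix ι ι ℝ} (hP : Pᵀ * diagonal w * P = diagonal w * P) (x : ι → ℝ) :
    ∑ i, w i * (P *ᵥ x) i ^ 2 ≤ ∑ i, w i * x i ^ 2 := by
  set y := P *ᵥ x
  have hPt : Pᵀ * diagonal w = diagonal w * P := calc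
    Pᵀ * diagonal w = (diagonal w * P)ᵀ := by simp
    _ = diagonal w * P := by rw [← hP]; simp [Matrix.mul_assoc]
  have hcross : ∑ i, w i * y i * (x - y) i = 0 := calc
    ∑ i, w i * y i * (x - y) i = x ⬝ᵥ (Pᵀ *ᵥ (diagonal w *ᵥ (x - y))) := by
      rw [mulVec_transpose, dotProduct_comm, ← dotProduct_mulVec]
      simp [dotProduct, mulVec_diagonal, y, mul_comm, mul_left_comm, mul_assoc]
    _ = 0 := by
      rw [mulVec_mulVec, mulVec_sub, mulVec_mulVec, hP, hPt, sub_self,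
        dotProduct_zero]
  have hsplit : ∀ i, w i * x i ^ 2 =
      w i * y i ^ 2 + w i * (x - y) i ^ 2 + 2 * (w i * y i * (x - y) i) := fun i => by
    simp only [Pi.sub_apply]; ring
  rw [Finset.sum_congr rfl fun i _ => hsplit i, Finset.sum_add_distrib, Finset.sum_add_distrib,
    ← Finset.mul_sum, hcross, mul_zero, add_zero]
  exact le_add_of_nonneg_right (Finset.sum_nonneg fun i _ => mul_nonneg (hw i) (sq_nonneg _))

theorem sum_mul_sum_mul_sq_le_of_transpose_mul_diagonal_mul_eq {w : ι → ℝ} (hw : ∀ i, 0 ≤ w i)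
    {P : Matrix ι ι ℝ} (hP : Pᵀ * diagonal w * P = diagonal w * P) (M : Matrix ι κ ℝ) :
    ∑ i, w i * ∑ j, (P * M) i j ^ 2 ≤ ∑ i, w i * ∑ j, M i j ^ 2 := by
  simp only [Finset.mul_sum]
  rw [Finset.sum_comm, Finset.sum_comm (f := fun i j => w i * M i j ^ 2)]
  refine Finset.sum_le_sum fun j _ => ?_
  exact sum_mul_mulVec_sq_le_of_transpose_mul_diagonal_mul_eq hw hP (fun r => M r j)

theorem exists_mem_orthogonalGroup_mulVec_eq_single {κ : Type*} [Fintype κ]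
    [DecidableEq κ] (a : κ → ℝ) (j₀ : κ) :
    ∃ Γ ∈ orthogonalGroup κ ℝ, Γ *ᵥ a = Pi.single j₀ √(∑ j, a j ^ 2) := by
  let b := EuclideanSpace.basisFun κ ℝ
  let v : EuclideanSpace ℝ κ := WithLp.toLp 2 a
  let e : EuclideanSpace ℝ κ := EuclideanSpace.single j₀ √(∑ j, a j ^ 2)
  have hnorm : ‖v‖ = ‖e‖ := by
    rw [PiLp.norm_single, EuclideanSpace.norm_eq, Real.norm_of_nonneg (by positivity)]
    simp [v]
  let R := Submodule.reflection (ℝ ∙ (v - e))ᗮ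
  refine ⟨LinearMap.toMatrix b.toBasis b.toBasis R.toLinearMap,
    R.toMatrix_mem_unitaryGroup b b, ?_⟩
  have hR : R v = e := Submodule.reflection_sub hnorm
  change WithLp.ofLp (toEuclideanLin _ v) = _
  rw [toEuclideanLin_eq_toLin_orthonormal, toLin_toMatrix]
  simpa [e] using congrArg WithLp.ofLp hR

end Matrix

section Spherical

variable {κ ι : Type*} [Fintype κ] [DecidableEq κ] [Fintype ι]
  {η : Measure (κ → ℝ)} [SigmaFinite η] {F : (ι → ℝ) → ℝ≥0∞}

theorem lintegral_pi_dotProduct_eq (hη : ∀ Γ ∈ orthogonalGroup κ ℝ, η.map (Γ *ᵥ ·) = η)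
    (hF : Measurable F) (hF_smul : ∀ r : ℝ, 0 ≤ r → ∀ x, F (r • x) = ENNReal.ofReal (r ^ 2) * F x)
    (a : κ → ℝ) (j₀ : κ) :
    ∫⁻ V, F (fun t => a ⬝ᵥ V t) ∂Measure.pi (fun _ : ι => η) =
      ENNReal.ofReal (∑ j, a j ^ 2) * ∫⁻ V, F (fun t => V t j₀) ∂Measure.pi (fun _ : ι => η) := by
  obtain ⟨Γ, hΓ, hΓa⟩ := exists_mem_orthogonalGroup_mulVec_eq_single a j₀
  have hΓt : Γᵀ ∈ orthogonalGroup κ ℝ := transpose_mem_unitaryGroup_iff.mpr hΓ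
  have hrot : MeasurePreserving (fun V : ι → κ → ℝ => fun t => Γᵀ *ᵥ V t)
      (Measure.pi fun _ => η) (Measure.pi fun _ => η) :=
    measurePreserving_pi _ _ fun _ => ⟨by fun_prop, hη _ hΓt⟩
  have hdot : ∀ v : κ → ℝ, a ⬝ᵥ (Γᵀ *ᵥ v) = √(∑ j, a j ^ 2) * v j₀ := fun v => by
    rw [dotProduct_mulVec, vecMul_transpose, hΓa]
    simp
  have hmeas : Measurable fun V : ι → κ → ℝ => F fun t => a ⬝ᵥ V t := by fun_prop
  rw [← hrot.lintegral_comp hmeas, ← lintegral_const_mul _ (by fun_prop)]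
  refine lintegral_congr fun V => ?_
  simp only [hdot]
  have := hF_smul _ (Real.sqrt_nonneg (∑ j, a j ^ 2)) (fun t => V t j₀)
  rwa [Real.sq_sqrt (by positivity)] at this

theorem exists_lintegral_pi_dotProduct_eq (hη : ∀ Γ ∈ orthogonalGroup κ ℝ, η.map (Γ *ᵥ ·) = η)
    (hF : Measurable F) (hF_smul : ∀ r : ℝ, 0 ≤ r → ∀ x, F (r • x) = ENNReal.ofReal (r ^ 2) * F x) :
    ∃ C, ∀ a : κ → ℝ, ∫⁻ V, F (fun t => a ⬝ᵥ V t) ∂Measure.pi (fun _ : ι => η) =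
      ENNReal.ofReal (∑ j, a j ^ 2) * C := by
  rcases isEmpty_or_nonempty κ with hκ | ⟨⟨j₀⟩⟩
  · have hF0 : F 0 = 0 := by simpa using hF_smul 0 le_rfl 0
    exact ⟨0, fun a => by simp [← Pi.zero_def, hF0, lintegral_zero_fun]⟩
  · exact ⟨_, fun a => lintegral_pi_dotProduct_eq hη hF hF_smul a j₀⟩

end Spherical

theorem lintegral_comp_eq_lintegral_pi_of_map_eq {Ω β γ ι : Type*} [MeasurableSpace Ω]
    [MeasurableSpace β] [MeasurableSpace γ] [Fintype ι] {μ : Measure Ω} [IsProbabilityMeasure μ]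
    {X : ι → Ω → β} (hX : ∀ t, Measurable (X t)) (hindep : iIndepFun X μ) {η : Measure γ}
    [IsProbabilityMeasure η] {f : γ → β} (hf : Measurable f) (hlaw : ∀ t, μ.map (X t) = η.map f)
    {G : (ι → β) → ℝ≥0∞} (hG : Measurable G) :
    ∫⁻ ω, G (fun t => X t ω) ∂μ = ∫⁻ V, G (fun t => f (V t)) ∂Measure.pi (fun _ : ι => η) := by
  have : IsProbabilityMeasure (η.map f) := Measure.isProbabilityMeasure_map hf.aemeasurable
  rw [← lintegral_map hG (measurable_pi_lambda _ hX),
    (iIndepFun_iff_map_fun_eq_pi_map fun t => (hX t).aemeasurable).mp hindep, funext hlaw,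
    ← Measure.pi_map_pi fun _ => hf.aemeasurable, lintegral_map hG (by fun_prop)]

theorem IsSpherical.map_mulVec_map_eq {Ω : Type*} [MeasurableSpace Ω] {μ : Measure Ω} {k : ℕ}
    {z : Ω → Fin k → ℝ} (hsph : IsSpherical μ z) (hz : Measurable z) :
    ∀ Γ ∈ orthogonalGroup (Fin k) ℝ, (μ.map z).map (Γ *ᵥ ·) = μ.map z := fun Γ hΓ => by
  rw [Measure.map_map (by fun_prop) hz]
  exact hsph Γ (by simpa [star_eq_conjTranspose] using mem_unitaryGroup_iff.mp hΓ)

theorem exists_lintegral_sum_ostatGap_sq_eq {Ω ι κ : Type*} [MeasurableSpace Ω] {μ : Measure Ω}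
    [IsProbabilityMeasure μ] [Fintype ι] [DecidableEq ι] [Fintype κ] {N klo khi : ℕ}
    (hlo : klo ∈ Set.Icc 1 N) (hhi : khi ∈ Set.Icc 1 N) {s : Fin N → Ω → ι → ℝ}
    (hs : ∀ t, Measurable (s t)) (hindep : iIndepFun s μ) {t₀ : Fin N}
    (hident : ∀ t, IdentDistrib (s t) (s t₀) μ μ) (hell : IsElliptical μ (s t₀))
    {w : κ → ℝ} (hw : ∀ i, 0 ≤ w i) :
    ∃ (k : ℕ) (M : Matrix ι (Fin k) ℝ) (C : ℝ≥0∞), ∀ A : Matrix κ ι ℝ,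
      ∫⁻ ω, ∑ i, ENNReal.ofReal (w i) * ostatGap klo khi (fun t => (A *ᵥ s t ω) i) ^ 2 ∂μ =
        ENNReal.ofReal (∑ i, w i * ∑ j, (A * M) i j ^ 2) * C := by
  obtain ⟨k, c, M, z, hz, -, hsph, hlaw⟩ := hell
  have hη := IsSpherical.map_mulVec_map_eq hsph hz
  have : IsProbabilityMeasure (μ.map z) := Measure.isProbabilityMeasure_map hz.aemeasurable
  have hF : Measurable fun x : Fin N → ℝ => ostatGap klo khi x ^ 2 :=
    (measurable_ostatGap klo khi).pow_const 2
  have hF_smul : ∀ r : ℝ, 0 ≤ r → ∀ x : Fin N → ℝ,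
      ostatGap klo khi (r • x) ^ 2 = ENNReal.ofReal (r ^ 2) * ostatGap klo khi x ^ 2 :=
    fun r hr x => by rw [ostatGap_smul hlo hhi hr, mul_pow, ENNReal.ofReal_pow hr]
  obtain ⟨C, hC⟩ := exists_lintegral_pi_dotProduct_eq hη hF hF_smul
  have haff : Measurable fun v : Fin k → ℝ => c + M *ᵥ v := by fun_prop
  have hlaw' : ∀ t, μ.map (s t) = (μ.map z).map (fun v => c + M *ᵥ v) := fun t => by
    rw [(hident t).map_eq, hlaw, Measure.map_map haff hz]; rfl
  have hrow : ∀ (A : Matrix κ ι ℝ) i v, (A *ᵥ (c + M *ᵥ v)) i = (A *ᵥ c) i + (A * M) i ⬝ᵥ v :=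
    fun A i v => by rw [mulVec_add, mulVec_mulVec]; rfl
  refine ⟨k, M, C, fun A => ?_⟩
  have hmeas : ∀ i, Measurable fun x : Fin N → ι → ℝ =>
      ostatGap klo khi (fun t => (A *ᵥ x t) i) ^ 2 := fun i => hF.comp (by fun_prop)
  calc ∫⁻ ω, ∑ i, ENNReal.ofReal (w i) * ostatGap klo khi (fun t => (A *ᵥ s t ω) i) ^ 2 ∂μ
      = ∑ i, ENNReal.ofReal (w i) * ∫⁻ V, ostatGap klo khi (fun t => (A * M) i ⬝ᵥ V t) ^ 2
          ∂Measure.pi (fun _ : Fin N => μ.map z) := by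
        rw [lintegral_comp_eq_lintegral_pi_of_map_eq hs hindep haff hlaw'
          (Finset.measurable_sum _ fun i _ => (hmeas i).const_mul _)]
        have hmeas' : ∀ i, Measurable fun V : Fin N → Fin k → ℝ =>
            ostatGap klo khi (fun t => (A *ᵥ (c + M *ᵥ V t)) i) ^ 2 :=
          fun i => (hmeas i).comp (by fun_prop)
        rw [lintegral_finsetSum _ fun i _ => (hmeas' i).const_mul _]
        simp only [lintegral_const_mul' _ _ ENNReal.ofReal_ne_top, hrow, ostatGap_const_add hlo hhi]
    _ = ENNReal.ofReal (∑ i, w i * ∑ j, (A * M) i j ^ 2) * C := by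
        simp only [hC, ← mul_assoc, ← ENNReal.ofReal_mul (hw _), ← Finset.sum_mul]
        rw [ENNReal.ofReal_sum_of_nonneg fun i _ => mul_nonneg (hw i) (by positivity)]

theorem stmt3_general {Ω : Type*} [MeasurableSpace Ω] (μ : Measure Ω) [IsProbabilityMeasure μ]
    (α : ℝ) (hα : α ∈ Set.Ioo (0 : ℝ) 1)
    (n p : ℕ)
    (Hsub : Matrix (Fin p) (Fin n) ℝ)
    (H : Matrix (Fin n ⊕ Fin p) (Fin n) ℝ) (hH : H = Matrix.fromRows 1 Hsub)
    (w : (Fin n ⊕ Fin p) → ℝ) (hw : ∀ i, 0 < w i)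
    (Pw : Matrix (Fin n ⊕ Fin p) (Fin n ⊕ Fin p) ℝ)
    (hPw : Pw = H * (Hᵀ * Matrix.diagonal w * H)⁻¹ * (Hᵀ * Matrix.diagonal w))
    (N : ℕ)
    (shat : Fin N → Ω → (Fin n ⊕ Fin p) → ℝ)
    (hmeas : ∀ t, Measurable (shat t))
    (hindep : iIndepFun shat μ)
    (hident : ∀ t t', IdentDistrib (shat t) (shat t') μ μ)
    (hell : ∀ t, IsElliptical μ (shat t))
    (stilde : Fin N → Ω → (Fin n ⊕ Fin p) → ℝ)
    (hstilde : ∀ t ω, stilde t ω = Pw.mulVec (shat t ω))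
    (klo khi : ℕ)
    (hklo : klo = ⌊((N : ℝ) + 1) * α / 2⌋₊)
    (hkhi : khi = ⌈((N : ℝ) + 1) * (1 - α / 2)⌉₊)
    (ellhat elltilde : (Fin n ⊕ Fin p) → Ω → EReal)
    (hellhat : ∀ i ω, ellhat i ω =
      ostatE (fun t => shat t ω i) khi - ostatE (fun t => shat t ω i) klo)
    (helltilde : ∀ i ω, elltilde i ω =
      ostatE (fun t => stilde t ω i) khi - ostatE (fun t => stilde t ω i) klo) :
    ∫⁻ ω, ∑ i, ENNReal.ofReal (w i) * (erealToENNReal (elltilde i ω)) ^ 2 ∂μ ≤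
      ∫⁻ ω, ∑ i, ENNReal.ofReal (w i) * (erealToENNReal (ellhat i ω)) ^ 2 ∂μ := by
  subst hklo hkhi
  rcases eq_or_ne ⌊((N : ℝ) + 1) * α / 2⌋₊ 0 with hlo0 | hlo0
  · refine lintegral_mono fun ω => Finset.sum_le_sum fun i _ => ?_
    rw [hellhat, hlo0, erealToENNReal_ostatE_sub_ostatE_zero
      (ceil_mul_one_sub_half_ne_zero (by linarith [hα.2])), ENNReal.top_pow two_ne_zero,
      ENNReal.mul_top (ENNReal.ofReal_pos.mpr (hw i)).ne']
    exact le_top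
  obtain ⟨hlo, hhi⟩ := floor_ceil_ranks_mem_Icc hα.2.le hlo0
  simp only [hellhat, helltilde, hstilde, erealToENNReal_ostatE_sub_ostatE hlo hhi]
  obtain ⟨k, M, C, hC⟩ := exists_lintegral_sum_ostatGap_sq_eq hlo hhi hmeas hindep
    (t₀ := ⟨0, hlo.1.trans hlo.2⟩) (fun t => hident t _) (hell _) (fun i => (hw i).le)
  have hproj : Pwᵀ * diagonal w * Pw = diagonal w * Pw := by
    subst hPw hH
    exact transpose_weightedProj_mul_diagonal_mul (posDef_transpose_mul_diagonal_mul hw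
      (injective_mulVec_fromRows_one Hsub)).det_pos.ne'.isUnit
  have hid := hC 1
  simp only [one_mulVec, Matrix.one_mul] at hid
  rw [hC, hid]
  gcongr ENNReal.ofReal ?_ * _
  exact sum_mul_sum_mul_sq_le_of_transpose_mul_diagonal_mul_eq (fun i => (hw i).le) hproj M

/-- Efficiency of hierarchical component-wise SCP for a fixed weight
vector `w`: with the projection `P_w = H (Hᵀ diag(w) H)⁻¹ Hᵀ diag(w)`, the expected
weighted sum of squared interval lengths is reduced. -/
theorem stmt3 {Ω : Type*} [MeasurableSpace Ω] (μ : Measure Ω) [IsProbabilityMeasure μ]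
    (α : ℝ) (hα : α ∈ Set.Ioo (0 : ℝ) 1)
    (n p : ℕ) (hn : 2 ≤ n) (hp : 1 ≤ p)
    (Hsub : Matrix (Fin p) (Fin n) ℝ)
    (H : Matrix (Fin n ⊕ Fin p) (Fin n) ℝ) (hH : H = Matrix.fromRows 1 Hsub)
    (w : (Fin n ⊕ Fin p) → ℝ) (hw : ∀ i, 0 < w i)
    (Pw : Matrix (Fin n ⊕ Fin p) (Fin n ⊕ Fin p) ℝ)
    (hPw : Pw = H * (Hᵀ * Matrix.diagonal w * H)⁻¹ * (Hᵀ * Matrix.diagonal w))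
    (N : ℕ) (hN : 1 ≤ N)
    (shat : Fin N → Ω → (Fin n ⊕ Fin p) → ℝ)
    (hmeas : ∀ t, Measurable (shat t))
    (hindep : iIndepFun shat μ)
    (hident : ∀ t t', IdentDistrib (shat t) (shat t') μ μ)
    (hell : ∀ t, IsElliptical μ (shat t))
    (stilde : Fin N → Ω → (Fin n ⊕ Fin p) → ℝ)
    (hstilde : ∀ t ω, stilde t ω = Pw.mulVec (shat t ω))
    (klo khi : ℕ)
    (hklo : klo = ⌊((N : ℝ) + 1) * α / 2⌋₊)
    (hkhi : khi = ⌈((N : ℝ) + 1) * (1 - α / 2)⌉₊)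
    (ellhat elltilde : (Fin n ⊕ Fin p) → Ω → EReal)
    (hellhat : ∀ i ω, ellhat i ω =
      ostatE (fun t => shat t ω i) khi - ostatE (fun t => shat t ω i) klo)
    (helltilde : ∀ i ω, elltilde i ω =
      ostatE (fun t => stilde t ω i) khi - ostatE (fun t => stilde t ω i) klo) :
    ∫⁻ ω, ∑ i, ENNReal.ofReal (w i) * (erealToENNReal (elltilde i ω)) ^ 2 ∂μ ≤
      ∫⁻ ω, ∑ i, ENNReal.ofReal (w i) * (erealToENNReal (ellhat i ω)) ^ 2 ∂μ :=
  stmt3_general μ α hα n p Hsub H hH w hw Pw hPw N shat hmeas hindep hident hell stilde hstilde klo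
    khi hklo hkhi ellhat elltilde hellhat helltilde
end

section
/- Let H be a structural matrix, let W be a symmetric positive semi-definite m×m real matrix, and let Σ be a symmetric positive definite m×m real matrix. Set P_{Σ⁻¹} = H(HᵀΣ⁻¹H)⁻¹HᵀΣ⁻¹. Then for every projection matrix P onto Im(H), Tr(W P_{Σ⁻¹} Σ P_{Σ⁻¹}ᵀ) ≤ Tr(W P Σ Pᵀ). -/
/-!
Write `Q = H (Hᵀ Σ⁻¹ H)⁻¹ Hᵀ Σ⁻¹`. Then `Q Σ = H (Hᵀ Σ⁻¹ H)⁻¹ Hᵀ`, and every projection `P` onto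
`Im H` fixes `H`, so `(P - Q) H = 0` and the cross term `Q Σ (P - Q)ᵀ` vanishes. This gives the
Pythagorean decomposition `P Σ Pᵀ = Q Σ Qᵀ + (P - Q) Σ (P - Q)ᵀ`, and the trace of `W` times the
positive semidefinite second summand is nonnegative.
-/

open Matrix

namespace Matrix

variable {m k : Type*} [Fintype m] [Fintype k]

open scoped MatrixOrder ComplexOrder in
lemma PosSemidef.trace_mul_nonneg {𝕜 : Type*} [RCLike 𝕜] [DecidableEq m] {A B : Matrix m m 𝕜}
    (hA : A.PosSemidef) (hB : B.PosSemidef) : 0 ≤ (A * B).trace := by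
  set S := CFC.sqrt A
  have hS : Sᴴ = S := (CFC.sqrt_nonneg A).posSemidef.isHermitian.eq
  calc 0 ≤ (S * B * Sᴴ).trace := (hB.mul_mul_conjTranspose_same S).trace_nonneg
    _ = (A * B).trace := by
      rw [hS, trace_mul_cycle, CFC.sqrt_mul_sqrt_self A hA.nonneg]

lemma mul_eq_of_idempotent_of_range_subset {R : Type*} [CommSemiring R]
    {P : Matrix m m R} {H : Matrix m k R} (hP : P * P = P)
    (hH : Set.range H.mulVec ⊆ Set.range P.mulVec) : P * H = H := by
  refine ext_iff_mulVec.mpr fun x => ?_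
  obtain ⟨y, hy⟩ := hH ⟨x, rfl⟩
  rw [← mulVec_mulVec, ← hy, mulVec_mulVec, hP]

lemma add_mul_mul_transpose_add {R : Type*} [CommRing R] {X Y S : Matrix m m R}
    (hS : Sᵀ = S) (hXY : X * S * Yᵀ = 0) :
    (X + Y) * S * (X + Y)ᵀ = X * S * Xᵀ + Y * S * Yᵀ := by
  have hYX : Y * S * Xᵀ = 0 := by
    rw [← transpose_transpose (Y * S * Xᵀ)]
    simp only [transpose_mul, transpose_transpose, hS, ← Matrix.mul_assoc, hXY, transpose_zero]
  simp only [add_mul, mul_add, transpose_add, hXY, hYX]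
  abel

lemma mulVec_injective_fromRows_one {R n p : Type*} [CommSemiring R] [Fintype n]
    [DecidableEq n] (B : Matrix p n R) :
    Function.Injective (fromRows (1 : Matrix n n R) B).mulVec :=
  fun x y hxy => by
    simpa only [fromRows_mulVec, Sum.elim_comp_inl, one_mulVec] using congrArg (· ∘ Sum.inl) hxy

variable [DecidableEq m] [DecidableEq k]

/-- The projection `P_{Σ⁻¹}` onto `Im H` along `ker (Hᵀ Σ⁻¹)`. -/
noncomputable def glsProjection (H : Matrix m k ℝ) (S : Matrix m m ℝ) : Matrix m m ℝ :=
  H * (Hᵀ * S⁻¹ * H)⁻¹ * (Hᵀ * S⁻¹)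

variable {H : Matrix m k ℝ} {S : Matrix m m ℝ}

omit [DecidableEq k] in
lemma PosDef.transpose_mul_inv_mul (hS : S.PosDef) (hH : Function.Injective H.mulVec) :
    (Hᵀ * S⁻¹ * H).PosDef := by
  simpa only [conjTranspose_eq_transpose_of_trivial] using
    hS.inv.conjTranspose_mul_mul_same hH

lemma glsProjection_mul_self (hS : IsUnit S) :
    glsProjection H S * S = H * (Hᵀ * S⁻¹ * H)⁻¹ * Hᵀ := by
  rw [glsProjection, Matrix.mul_assoc _ (Hᵀ * S⁻¹), Matrix.mul_assoc Hᵀ S⁻¹ S,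
    nonsing_inv_mul S ((isUnit_iff_isUnit_det S).mp hS), Matrix.mul_one]

lemma glsProjection_mul (hG : IsUnit (Hᵀ * S⁻¹ * H)) : glsProjection H S * H = H := by
  rw [glsProjection, Matrix.mul_assoc _ (Hᵀ * S⁻¹), Matrix.mul_assoc H,
    nonsing_inv_mul _ ((isUnit_iff_isUnit_det _).mp hG), Matrix.mul_one]

lemma glsProjection_mul_mul_transpose_sub (hS : S.PosDef) (hH : Function.Injective H.mulVec)
    {P : Matrix m m ℝ} (hPH : P * H = H) :
    glsProjection H S * S * (P - glsProjection H S)ᵀ = 0 := by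
  have hPSH : glsProjection H S * H = H := glsProjection_mul (hS.transpose_mul_inv_mul hH).isUnit
  rw [glsProjection_mul_self hS.isUnit, Matrix.mul_assoc, ← transpose_mul, Matrix.sub_mul, hPH,
    hPSH, sub_self, transpose_zero, Matrix.mul_zero]

theorem trace_mul_glsProjection_le {W : Matrix m m ℝ} (hW : W.PosSemidef) (hS : S.PosDef)
    (hH : Function.Injective H.mulVec) {P : Matrix m m ℝ} (hPH : P * H = H) :
    (W * glsProjection H S * S * (glsProjection H S)ᵀ).trace ≤ (W * P * S * Pᵀ).trace := by
  set Q := glsProjection H S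
  have hS' : Sᵀ = S := by simpa only [conjTranspose_eq_transpose_of_trivial] using hS.1.eq
  have hP : P * S * Pᵀ = Q * S * Qᵀ + (P - Q) * S * (P - Q)ᵀ := by
    conv_lhs => rw [← add_sub_cancel Q P]
    exact add_mul_mul_transpose_add hS' (glsProjection_mul_mul_transpose_sub hS hH hPH)
  have hD : ((P - Q) * S * (P - Q)ᵀ).PosSemidef := by
    simpa only [conjTranspose_eq_transpose_of_trivial] using
      hS.posSemidef.mul_mul_conjTranspose_same (P - Q)
  simp only [Matrix.mul_assoc W]
  rw [hP, Matrix.mul_add, trace_add]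
  exact le_add_of_nonneg_right (hW.trace_mul_nonneg hD)

end Matrix

theorem stmt6_general (n p : ℕ)
    (Hsub : Matrix (Fin p) (Fin n) ℝ)
    (H : Matrix (Fin n ⊕ Fin p) (Fin n) ℝ) (hH : H = Matrix.fromRows 1 Hsub)
    (W Sig : Matrix (Fin n ⊕ Fin p) (Fin n ⊕ Fin p) ℝ)
    (hW : W.PosSemidef) (hSig : Sig.PosDef)
    (PS : Matrix (Fin n ⊕ Fin p) (Fin n ⊕ Fin p) ℝ)
    (hPS : PS = H * (Hᵀ * Sig⁻¹ * H)⁻¹ * (Hᵀ * Sig⁻¹))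
    (P : Matrix (Fin n ⊕ Fin p) (Fin n ⊕ Fin p) ℝ)
    (hP1 : P * P = P) (hP2 : Set.range P.mulVec = Set.range H.mulVec) :
    (W * PS * Sig * PSᵀ).trace ≤ (W * P * Sig * Pᵀ).trace := by
  have hHinj : Function.Injective H.mulVec := hH ▸ mulVec_injective_fromRows_one Hsub
  have hPH : P * H = H := mul_eq_of_idempotent_of_range_subset hP1 hP2.ge
  exact hPS ▸ trace_mul_glsProjection_le hW hSig hHinj hPH

/-- Minimum-trace projection (Wickramasuriya et al., 2019): among all
projection matrices `P` onto `Im(H)`, the projection `P_{Σ⁻¹}` minimizes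
`Tr(W P Σ Pᵀ)` for every symmetric positive semi-definite `W`. -/
theorem stmt6 (n p : ℕ) (hn : 2 ≤ n) (hp : 1 ≤ p)
    (Hsub : Matrix (Fin p) (Fin n) ℝ)
    (H : Matrix (Fin n ⊕ Fin p) (Fin n) ℝ) (hH : H = Matrix.fromRows 1 Hsub)
    (W Sig : Matrix (Fin n ⊕ Fin p) (Fin n ⊕ Fin p) ℝ)
    (hW : W.PosSemidef) (hSig : Sig.PosDef)
    (PS : Matrix (Fin n ⊕ Fin p) (Fin n ⊕ Fin p) ℝ)
    (hPS : PS = H * (Hᵀ * Sig⁻¹ * H)⁻¹ * (Hᵀ * Sig⁻¹))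
    (P : Matrix (Fin n ⊕ Fin p) (Fin n ⊕ Fin p) ℝ)
    (hP1 : P * P = P) (hP2 : Set.range P.mulVec = Set.range H.mulVec) :
    (W * PS * Sig * PSᵀ).trace ≤ (W * P * Sig * Pᵀ).trace :=
  stmt6_general n p Hsub H hH W Sig hW hSig PS hPS P hP1 hP2
end
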